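/- arXiv:2101.10543 — 7 statements merged into one kernel-verified Lean document; each statement's English description precedes it below -/
import Mathlib

section
/- Let n be a positive integer with n ≡ 1 (mod 4) and let d = (3^((n+1)/2) - 1)/2. Then the power function F(x) = x^d on GF(3^n) has (-1)-differential uniformity at most 2; that is, for all a, b ∈ GF(3^n), the number of x ∈ GF(3^n) satisfying (x+a)^d + x^d = b is at most 2. -/
/-!
Put `m = (n + 1) / 2`, `σ u = u ^ 3 ^ m` and `N u = u σ(u) = u ^ (3 ^ m + 1)`, always a square.
Since `σ ∘ σ` is the cube map and `2d (3^m + 1) = 3^(2m) - 1`, every `x` has `N (x^d) = ± x`. For a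
solution `x` let `y = x^d`, so `(x + a)^d = b - y`, and sort the solutions by whether the signs in
`N y = ± x` and `N (b - y) = ± (x + a)` agree; each class holds at most one solution. Throughout,
two solutions with `y + y' = b` are impossible, as they give `x' = x + a` and `x = x' + a`.

If the signs agree, `b σ(y) + σ(b) y = N b ∓ a`, an additive equation in `y` whose kernel is
trivial because `-1` is not a square. If they differ, `N (y + b) = ± a - N b`. With equal `±` this
forces `y + b = ± (y' + b)`. With opposite `±`, `w = y + b` and `w' = y' + b` satisfy
`N w + N w' = N b`, and applying `σ` gives `N w (w² - w'²) = N b (b² - w'²)` and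
`N w' (w'² - w²) = N b (b² - w²)`. Now `-(b² - w²) = -y (b - y)` is a square, because
`x (x + a) = -N y · N (b - y)`; comparing square classes forces `y` or `y'` into `{0, b}`, and then
`w' = 0` or `w = 0`, i.e. `2y' = b` or `2y = b`.
-/

instance : Fact (Nat.Prime 3) := ⟨by norm_num⟩

open Function

theorem Set.ncard_le_two_of_forall_iff_imp_eq {α : Type*} {s : Set α} (P : α → Prop)
    (h : ∀ x ∈ s, ∀ y ∈ s, (P x ↔ P y) → x = y) : s.ncard ≤ 2 := by
  classical
  calc s.ncard ≤ (Set.univ : Set Bool).ncard :=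
        Set.ncard_le_ncard_of_injOn (fun x => decide (P x)) (fun _ _ => Set.mem_univ _)
          fun x hx y hy hxy => h x hx y hy (by simpa using hxy)
    _ = 2 := by simp

theorem eq_zero_of_isSquare_of_isSquare_neg {F : Type*} [Field F] (hneg : ¬IsSquare (-1 : F))
    {x : F} (hx : IsSquare x) (hx' : IsSquare (-x)) : x = 0 := by
  by_contra hx0
  obtain ⟨r, rfl⟩ := hx
  obtain ⟨s, hs⟩ := hx'
  have hr : r ≠ 0 := by rintro rfl; simp at hx0
  exact hneg ⟨s / r, by field_simp; linear_combination hs⟩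

section TwistNorm

variable {F : Type*} [Field F] (σ : F →+* F)

def twistNorm (u : F) : F := u * σ u

theorem twistNorm_eq_zero_iff {u : F} : twistNorm σ u = 0 ↔ u = 0 := by
  simp [twistNorm]

theorem twistNorm_neg (u : F) : twistNorm σ (-u) = twistNorm σ u := by
  simp [twistNorm]

theorem twistNorm_mul (u v : F) : twistNorm σ (u * v) = twistNorm σ u * twistNorm σ v := by
  simp only [twistNorm, map_mul]
  ring

theorem eq_zero_of_twistNorm_add_eq_of_sq_eq {b w w' : F}
    (hsum : twistNorm σ w + twistNorm σ w' = twistNorm σ b) (hw : w ^ 2 = b ^ 2) : w' = 0 := by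
  have hNw : twistNorm σ w = twistNorm σ b := by
    obtain rfl | rfl := sq_eq_sq_iff_eq_or_eq_neg.1 hw
    · rfl
    · exact twistNorm_neg σ b
  exact (twistNorm_eq_zero_iff σ).1 (by linear_combination hsum - hNw)

theorem eq_zero_of_map_eq_neg (hsq : ∀ u, IsSquare (twistNorm σ u)) (hneg : ¬IsSquare (-1 : F))
    {t : F} (ht : σ t = -t) : t = 0 := by
  rw [← twistNorm_eq_zero_iff σ]
  refine eq_zero_of_isSquare_of_isSquare_neg hneg (hsq t) ⟨t, ?_⟩
  rw [twistNorm, ht, mul_neg, neg_neg]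

theorem eq_of_mul_map_add_map_mul_eq (hsq : ∀ u, IsSquare (twistNorm σ u))
    (hneg : ¬IsSquare (-1 : F)) {b z z' : F} (hb : b ≠ 0)
    (h : b * σ z + σ b * z = b * σ z' + σ b * z') : z = z' := by
  have hσb : σ b ≠ 0 := (map_ne_zero σ).2 hb
  have h0 : (z - z') / b = 0 := eq_zero_of_map_eq_neg σ hsq hneg <| by
    rw [map_div₀, map_sub]
    field_simp
    linear_combination h
  rw [div_eq_zero_iff, sub_eq_zero] at h0
  exact h0.resolve_right hb

theorem mul_eq_zero_of_twistNorm_add_eq (hsq : ∀ u, IsSquare (twistNorm σ u))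
    (hneg : ¬IsSquare (-1 : F)) (hσσ : ∀ x, σ (σ x) = x ^ 3) {b w w' : F} (hb : b ≠ 0)
    (hsum : twistNorm σ w + twistNorm σ w' = twistNorm σ b)
    (hw : IsSquare (-(b ^ 2 - w ^ 2))) (hw' : IsSquare (-(b ^ 2 - w' ^ 2))) :
    (b ^ 2 - w ^ 2) * (b ^ 2 - w' ^ 2) = 0 := by
  have hσN : ∀ u, σ (twistNorm σ u) = twistNorm σ u * u ^ 2 := fun u => by
    rw [twistNorm, map_mul, hσσ]
    ring
  have hsum' : twistNorm σ w * w ^ 2 + twistNorm σ w' * w' ^ 2 = twistNorm σ b * b ^ 2 := by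
    simpa only [map_add, hσN] using congrArg σ hsum
  have e : twistNorm σ w * (w ^ 2 - w' ^ 2) = twistNorm σ b * (b ^ 2 - w' ^ 2) := by
    linear_combination hsum' - w' ^ 2 * hsum
  have e' : twistNorm σ w' * (w' ^ 2 - w ^ 2) = twistNorm σ b * (b ^ 2 - w ^ 2) := by
    linear_combination hsum' - w ^ 2 * hsum
  have hX : twistNorm σ b ^ 2 * ((b ^ 2 - w ^ 2) * (b ^ 2 - w' ^ 2))
      = -(twistNorm σ w * twistNorm σ w' * (w ^ 2 - w' ^ 2) ^ 2) := by
    linear_combination -(twistNorm σ b * (b ^ 2 - w ^ 2)) * e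
      - (twistNorm σ w * (w ^ 2 - w' ^ 2)) * e'
  have hA : IsSquare ((b ^ 2 - w ^ 2) * (b ^ 2 - w' ^ 2)) := by
    rw [← neg_mul_neg]
    exact hw.mul hw'
  have h0 := eq_zero_of_isSquare_of_isSquare_neg hneg (((hsq b).pow 2).mul hA)
    (by rw [hX, neg_neg]; exact ((hsq w).mul (hsq w')).mul (IsSquare.sq _))
  exact (mul_eq_zero.1 h0).resolve_left (pow_ne_zero 2 ((twistNorm_eq_zero_iff σ).not.2 hb))

theorem twistNorm_pow_mul_eq_or_eq_neg {d : ℕ} (hsign : ∀ x : F, twistNorm σ (x ^ d) ^ 2 = x ^ 2)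
    {a : F} (x : F) :
    twistNorm σ (x ^ d) * twistNorm σ ((x + a) ^ d) = x * (x + a) ∨
      twistNorm σ (x ^ d) * twistNorm σ ((x + a) ^ d) = -(x * (x + a)) :=
  sq_eq_sq_iff_eq_or_eq_neg.1 (by rw [mul_pow, mul_pow, hsign, hsign])

end TwistNorm

section Solutions

variable {F : Type*} [Field F] [CharP F 3] (σ : F →+* F) {d : ℕ} {a b : F}

theorem eq_zero_of_pow_add_pow_eq (hinj : Injective fun x : F => x ^ d) {x x' : F}
    (hx : (x + a) ^ d + x ^ d = b) (hx' : (x' + a) ^ d + x' ^ d = b) (h : x ^ d + x' ^ d = b) :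
    a = 0 := by
  have h3 : (3 : F) = 0 := CharP.ofNat_eq_zero F 3
  have e : x' = x + a := hinj (by linear_combination h - hx)
  have e' : x = x' + a := hinj (by linear_combination h - hx')
  linear_combination e + e' + a * h3

theorem eq_of_twistNorm_pow_mul_eq (hinj : Injective fun x : F => x ^ d)
    (hsign : ∀ x : F, twistNorm σ (x ^ d) ^ 2 = x ^ 2) (hsq : ∀ u, IsSquare (twistNorm σ u))
    (hneg : ¬IsSquare (-1 : F)) (ha : a ≠ 0) (hb : b ≠ 0) {x x' : F}
    (hx : (x + a) ^ d + x ^ d = b) (hx' : (x' + a) ^ d + x' ^ d = b)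
    (hk : twistNorm σ (x ^ d) * twistNorm σ ((x + a) ^ d) = x * (x + a))
    (hk' : twistNorm σ (x' ^ d) * twistNorm σ ((x' + a) ^ d) = x' * (x' + a)) : x = x' := by
  have polar : ∀ {x : F}, (x + a) ^ d + x ^ d = b →
      twistNorm σ (x ^ d) * twistNorm σ ((x + a) ^ d) = x * (x + a) →
      (b * σ (x ^ d) + σ b * x ^ d - twistNorm σ b) ^ 2 = a ^ 2 := by
    intro x hx hk
    have hv : (x + a) ^ d = b - x ^ d := by linear_combination hx
    have hy := hsign x
    have hv' := hsign (x + a)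
    rw [hv] at hk hv'
    have hpolar : b * σ (x ^ d) + σ b * x ^ d - twistNorm σ b
        = twistNorm σ (x ^ d) - twistNorm σ (b - x ^ d) := by
      simp only [twistNorm, map_sub]
      ring
    rw [hpolar]
    linear_combination hy + hv' - 2 * hk
  rcases sq_eq_sq_iff_eq_or_eq_neg.1 ((polar hx hk).trans (polar hx' hk').symm) with h | h
  · exact hinj (eq_of_mul_map_add_map_mul_eq σ hsq hneg hb (by linear_combination h))
  · refine absurd (eq_zero_of_pow_add_pow_eq hinj hx hx' ?_) ha
    refine eq_of_mul_map_add_map_mul_eq σ hsq hneg hb ?_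
    rw [map_add]
    simp only [twistNorm] at h
    linear_combination h

theorem sq_twistNorm_pow_add_add_twistNorm (hsign : ∀ x : F, twistNorm σ (x ^ d) ^ 2 = x ^ 2)
    {x : F} (hx : (x + a) ^ d + x ^ d = b)
    (hk : twistNorm σ (x ^ d) * twistNorm σ ((x + a) ^ d) = -(x * (x + a))) :
    (twistNorm σ (x ^ d + b) + twistNorm σ b) ^ 2 = a ^ 2 := by
  have h3 : (3 : F) = 0 := CharP.ofNat_eq_zero F 3
  have hv : (x + a) ^ d = b - x ^ d := by linear_combination hx
  have hy := hsign x
  have hv' := hsign (x + a)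
  rw [hv] at hk hv'
  have hsum : twistNorm σ (x ^ d + b) + twistNorm σ b
      = -(twistNorm σ (x ^ d) + twistNorm σ (b - x ^ d)) := by
    simp only [twistNorm, map_sub, map_add]
    linear_combination (b * σ b + x ^ d * σ (x ^ d)) * h3
  rw [hsum]
  linear_combination hy + hv' + 2 * hk

theorem isSquare_neg_sq_sub_sq_pow_add (hd : Odd d) (hsq : ∀ u, IsSquare (twistNorm σ u))
    {x : F} (hx : (x + a) ^ d + x ^ d = b)
    (hk : twistNorm σ (x ^ d) * twistNorm σ ((x + a) ^ d) = -(x * (x + a))) :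
    IsSquare (-(b ^ 2 - (x ^ d + b) ^ 2)) := by
  have h3 : (3 : F) = 0 := CharP.ofNat_eq_zero F 3
  have e : -(b ^ 2 - (x ^ d + b) ^ 2) = twistNorm σ (x ^ d * (x + a) ^ d) ^ d := by
    rw [twistNorm_mul, hk, hd.neg_pow, mul_pow]
    linear_combination (x ^ d) * hx + (x ^ d * b) * h3
  rw [e]
  exact (hsq _).pow d

theorem eq_of_twistNorm_pow_mul_eq_neg (hd : Odd d) (hinj : Injective fun x : F => x ^ d)
    (hσσ : ∀ x, σ (σ x) = x ^ 3) (hsign : ∀ x : F, twistNorm σ (x ^ d) ^ 2 = x ^ 2)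
    (hsq : ∀ u, IsSquare (twistNorm σ u)) (hneg : ¬IsSquare (-1 : F))
    (hN : ∀ u v : F, twistNorm σ u = twistNorm σ v → u = v ∨ u = -v) (ha : a ≠ 0) (hb : b ≠ 0)
    {x x' : F} (hx : (x + a) ^ d + x ^ d = b) (hx' : (x' + a) ^ d + x' ^ d = b)
    (hk : twistNorm σ (x ^ d) * twistNorm σ ((x + a) ^ d) = -(x * (x + a)))
    (hk' : twistNorm σ (x' ^ d) * twistNorm σ ((x' + a) ^ d) = -(x' * (x' + a))) : x = x' := by
  have h3 : (3 : F) = 0 := CharP.ofNat_eq_zero F 3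
  have not_neg_b : ∀ {x : F}, (x + a) ^ d + x ^ d = b → x ^ d ≠ -b := fun hx h =>
    ha (eq_zero_of_pow_add_pow_eq hinj hx hx (by linear_combination 2 * h - b * h3))
  rcases sq_eq_sq_iff_eq_or_eq_neg.1 ((sq_twistNorm_pow_add_add_twistNorm σ hsign hx hk).trans
    (sq_twistNorm_pow_add_add_twistNorm σ hsign hx' hk').symm) with h | h
  · rcases hN (x ^ d + b) (x' ^ d + b) (by linear_combination h) with h' | h'
    · exact hinj (by linear_combination h')
    · exact absurd (eq_zero_of_pow_add_pow_eq hinj hx hx' (by linear_combination h' - b * h3)) ha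
  · have hsum : twistNorm σ (x ^ d + b) + twistNorm σ (x' ^ d + b) = twistNorm σ b := by
      linear_combination h - twistNorm σ b * h3
    rcases mul_eq_zero.1 (mul_eq_zero_of_twistNorm_add_eq σ hsq hneg hσσ hb hsum
      (isSquare_neg_sq_sub_sq_pow_add σ hd hsq hx hk)
      (isSquare_neg_sq_sub_sq_pow_add σ hd hsq hx' hk')) with hA | hA
    · have hw' := eq_zero_of_twistNorm_add_eq_of_sq_eq σ hsum (by linear_combination -hA)
      exact absurd (by linear_combination hw') (not_neg_b hx')
    · have hw := eq_zero_of_twistNorm_add_eq_of_sq_eq σ (b := b) (w := x' ^ d + b)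
        (w' := x ^ d + b) (by linear_combination hsum) (by linear_combination -hA)
      exact absurd (by linear_combination hw) (not_neg_b hx)

theorem ncard_pow_add_pow_eq_le_two (hd : Odd d) (hinj : Injective fun x : F => x ^ d)
    (hσσ : ∀ x, σ (σ x) = x ^ 3) (hsign : ∀ x : F, twistNorm σ (x ^ d) ^ 2 = x ^ 2)
    (hsq : ∀ u, IsSquare (twistNorm σ u)) (hneg : ¬IsSquare (-1 : F))
    (hN : ∀ u v : F, twistNorm σ u = twistNorm σ v → u = v ∨ u = -v) (a b : F) :
    {x : F | (x + a) ^ d + x ^ d = b}.ncard ≤ 2 := by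
  have h3 : (3 : F) = 0 := CharP.ofNat_eq_zero F 3
  rcases eq_or_ne a 0 with rfl | ha
  · have hs : {x : F | (x + 0) ^ d + x ^ d = b}.Subsingleton := by
      intro x (hx : (x + 0) ^ d + x ^ d = b) x' (hx' : (x' + 0) ^ d + x' ^ d = b)
      rw [add_zero] at hx hx'
      exact hinj (by linear_combination hx' - hx + (x ^ d - x' ^ d) * h3)
    exact ((Set.ncard_le_one hs.finite).2 hs).trans one_le_two
  rcases eq_or_ne b 0 with rfl | hb
  · have hs : {x : F | (x + a) ^ d + x ^ d = 0}.Subsingleton := by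
      have h : ∀ x : F, (x + a) ^ d + x ^ d = 0 → x = a := fun x hx => by
        have e : x + a = -x :=
          hinj (show (x + a) ^ d = (-x) ^ d by rw [hd.neg_pow]; linear_combination hx)
        linear_combination -e + x * h3
      intro x hx x' hx'
      rw [h x hx, h x' hx']
    exact ((Set.ncard_le_one hs.finite).2 hs).trans one_le_two
  -- `x` is classified by whether the signs in `N (x^d) = ± x` and `N ((x+a)^d) = ± (x+a)` agree.
  refine Set.ncard_le_two_of_forall_iff_imp_eq
    (fun x => twistNorm σ (x ^ d) * twistNorm σ ((x + a) ^ d) = x * (x + a)) ?_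
  intro x hx x' hx' hkind
  rcases twistNorm_pow_mul_eq_or_eq_neg σ hsign x with hk | hk
  · exact eq_of_twistNorm_pow_mul_eq σ hinj hsign hsq hneg ha hb hx hx' hk (hkind.1 hk)
  rcases twistNorm_pow_mul_eq_or_eq_neg σ hsign x' with hk' | hk'
  · exact eq_of_twistNorm_pow_mul_eq σ hinj hsign hsq hneg ha hb hx hx' (hkind.2 hk') hk'
  · exact eq_of_twistNorm_pow_mul_eq_neg σ hd hinj hσσ hsign hsq hneg hN ha hb hx hx' hk hk'

end Solutions

theorem Nat.three_pow_mod_four {k : ℕ} (hk : Odd k) : 3 ^ k % 4 = 3 := by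
  obtain ⟨j, rfl⟩ := hk
  rw [pow_succ, pow_mul, Nat.mul_mod, Nat.pow_mod]
  norm_num

theorem Nat.coprime_three_pow_sub_one {m n d : ℕ} (hm : 2 * m = n + 1) (hd : 2 * d + 1 = 3 ^ m)
    (hd_odd : Odd d) : d.Coprime (3 ^ n - 1) := by
  have hmn : m.gcd n = 1 := by
    have h := Nat.dvd_sub (dvd_mul_of_dvd_right (Nat.gcd_dvd_left m n) 2) (Nat.gcd_dvd_right m n)
    rwa [hm, Nat.add_sub_cancel_left, Nat.dvd_one] at h
  have h2 : (2 * d).gcd (3 ^ n - 1) = 2 := by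
    rw [show 2 * d = 3 ^ m - 1 by omega, Nat.pow_sub_one_gcd_pow_sub_one, hmn, pow_one]
  have hdvd : d.gcd (3 ^ n - 1) ∣ 2 := h2 ▸ Nat.gcd_dvd_gcd_of_dvd_left _ (dvd_mul_left d 2)
  rcases (Nat.dvd_prime Nat.prime_two).1 hdvd with h | h
  · exact h
  · exact absurd (h ▸ Nat.gcd_dvd_left d (3 ^ n - 1))
      (Nat.not_even_iff_odd.2 hd_odd ∘ even_iff_two_dvd.2)

theorem Nat.gcd_pow_add_one_pow_sub_one_dvd {q m n : ℕ} (hm : 2 * m = n + 1) :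
    (q ^ m + 1).gcd (q ^ n - 1) ∣ q - 1 := by
  have h : q ^ m + 1 ∣ q ^ (n + 1) - 1 :=
    ⟨q ^ m - 1, by rw [← hm, pow_mul', ← one_pow 2, Nat.sq_sub_sq, one_pow]⟩
  have h' := Nat.gcd_dvd_gcd_of_dvd_left (q ^ n - 1) h
  rwa [Nat.pow_sub_one_gcd_pow_sub_one, show (n + 1).gcd n = 1 by simp, pow_one] at h'

theorem FiniteField.pow_eq_pow_of_gcd_dvd {K : Type*} [Field K] [Fintype K] {k g : ℕ} (hk : k ≠ 0)
    (hg : k.gcd (Fintype.card K - 1) ∣ g) {u v : K} (h : u ^ k = v ^ k) : u ^ g = v ^ g := by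
  rcases eq_or_ne v 0 with rfl | hv
  · rw [zero_pow hk, pow_eq_zero_iff hk] at h
    rw [h]
  have hu : u ≠ 0 := fun hu => hv (pow_eq_zero_iff hk |>.1 (by rw [← h, hu, zero_pow hk]))
  have h1 : (u / v) ^ k.gcd (Fintype.card K - 1) = 1 := pow_gcd_eq_one.2
    ⟨by rw [div_pow, h, div_self (pow_ne_zero _ hv)],
      FiniteField.pow_card_sub_one_eq_one _ (div_ne_zero hu hv)⟩
  obtain ⟨c, rfl⟩ := hg
  have h2 : (u / v) ^ (k.gcd (Fintype.card K - 1) * c) = 1 := by rw [pow_mul, h1, one_pow]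
  rwa [div_pow, div_eq_one_iff_eq (pow_ne_zero _ hv)] at h2

section Frobenius

variable {K : Type*} [Field K] [CharP K 3] {m : ℕ}

theorem twistNorm_iterateFrobenius (u : K) :
    twistNorm (iterateFrobenius K 3 m) u = u ^ (3 ^ m + 1) := by
  rw [twistNorm, iterateFrobenius_def, pow_succ']

theorem isSquare_twistNorm_iterateFrobenius (u : K) :
    IsSquare (twistNorm (iterateFrobenius K 3 m) u) := by
  rw [twistNorm_iterateFrobenius]
  exact (Odd.pow (by decide : Odd 3)).add_one.isSquare_pow u

variable [Fintype K] {n : ℕ}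

theorem iterateFrobenius_iterateFrobenius (hcard : Fintype.card K = 3 ^ n) (hm : 2 * m = n + 1)
    (x : K) : iterateFrobenius K 3 m (iterateFrobenius K 3 m x) = x ^ 3 := by
  rw [iterateFrobenius_def, iterateFrobenius_def, ← pow_mul, ← pow_add, ← two_mul, hm, pow_succ,
    pow_mul, ← hcard, FiniteField.pow_card]

theorem twistNorm_iterateFrobenius_pow_sq (hcard : Fintype.card K = 3 ^ n) (hm : 2 * m = n + 1)
    {d : ℕ} (hd : 2 * d + 1 = 3 ^ m) (x : K) :
    twistNorm (iterateFrobenius K 3 m) (x ^ d) ^ 2 = x ^ 2 := by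
  have hd0 : d ≠ 0 := by
    rintro rfl
    have := Nat.one_lt_pow (show m ≠ 0 by omega) (show 1 < 3 by norm_num)
    omega
  rcases eq_or_ne x 0 with rfl | hx
  · simp [twistNorm, hd0]
  have hexp : 2 * d * (3 ^ m + 1) + 1 = 3 ^ m * 3 ^ m := by rw [← hd]; ring
  refine mul_right_cancel₀ hx ?_
  calc twistNorm (iterateFrobenius K 3 m) (x ^ d) ^ 2 * x = x ^ (2 * d * (3 ^ m + 1) + 1) := by
        rw [twistNorm_iterateFrobenius]; ring
    _ = iterateFrobenius K 3 m (iterateFrobenius K 3 m x) := by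
        rw [hexp, pow_mul, iterateFrobenius_def, iterateFrobenius_def]
    _ = x ^ 2 * x := by rw [iterateFrobenius_iterateFrobenius hcard hm, pow_succ]

theorem twistNorm_iterateFrobenius_eq_or_eq_neg (hcard : Fintype.card K = 3 ^ n)
    (hm : 2 * m = n + 1) {u v : K}
    (h : twistNorm (iterateFrobenius K 3 m) u = twistNorm (iterateFrobenius K 3 m) v) :
    u = v ∨ u = -v := by
  rw [twistNorm_iterateFrobenius, twistNorm_iterateFrobenius] at h
  refine sq_eq_sq_iff_eq_or_eq_neg.1 (FiniteField.pow_eq_pow_of_gcd_dvd (by positivity) ?_ h)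
  simpa [hcard] using Nat.gcd_pow_add_one_pow_sub_one_dvd (q := 3) hm

end Frobenius

theorem stmt_0_general (n : ℕ) (hcond : n % 4 = 1)
    (d : ℕ) (hd : d = (3 ^ ((n + 1) / 2) - 1) / 2) :
    ∀ a b : GaloisField 3 n,
      {x : GaloisField 3 n | (x + a) ^ d + x ^ d = b}.ncard ≤ 2 := by
  let := Fintype.ofFinite (GaloisField 3 n)
  have hcard : Fintype.card (GaloisField 3 n) = 3 ^ n := by
    rw [Fintype.card_eq_nat_card, GaloisField.card 3 n (by omega)]
  obtain ⟨m, hm⟩ : ∃ m, 2 * m = n + 1 := ⟨(n + 1) / 2, by omega⟩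
  rw [show (n + 1) / 2 = m by omega] at hd
  have hm_odd : Odd m := by rw [Nat.odd_iff]; omega
  obtain ⟨hd', hd_odd⟩ : 2 * d + 1 = 3 ^ m ∧ Odd d := by
    have hm3 := Nat.three_pow_mod_four hm_odd
    rw [Nat.odd_iff]
    generalize 3 ^ m = t at hm3 hd ⊢
    omega
  have hinj : Injective fun x : GaloisField 3 n => x ^ d := fun u v h => by
    have hcop := Nat.coprime_three_pow_sub_one hm hd' hd_odd
    rw [← hcard] at hcop
    simpa using FiniteField.pow_eq_pow_of_gcd_dvd (g := 1) hd_odd.pos.ne' hcop.gcd_eq_one.dvd h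
  have hneg : ¬IsSquare (-1 : GaloisField 3 n) := by
    rw [FiniteField.isSquare_neg_one_iff, hcard, Nat.three_pow_mod_four (by rw [Nat.odd_iff]; omega)]
    simp
  intro a b
  exact ncard_pow_add_pow_eq_le_two (iterateFrobenius _ 3 m) hd_odd hinj
    (iterateFrobenius_iterateFrobenius hcard hm) (twistNorm_iterateFrobenius_pow_sq hcard hm hd')
    isSquare_twistNorm_iterateFrobenius hneg
    (fun _ _ => twistNorm_iterateFrobenius_eq_or_eq_neg hcard hm) a b

theorem stmt_0 (n : ℕ) (hn : 0 < n) (hcond : n % 4 = 1)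
    (d : ℕ) (hd : d = (3 ^ ((n + 1) / 2) - 1) / 2) :
    ∀ a b : GaloisField 3 n,
      {x : GaloisField 3 n | (x + a) ^ d + x ^ d = b}.ncard ≤ 2 :=
  stmt_0_general n hcond d hd
end

section
/- Let n be a positive integer with n ≡ 3 (mod 4) and let d = (3^((n+1)/2) - 1)/2. Then the power function F(x) = x^d on GF(3^n) has (-1)-differential uniformity at most 4; that is, for all a, b ∈ GF(3^n), the number of x ∈ GF(3^n) satisfying (x+a)^d + x^d = b is at most 4. -/
/-!
Write `σ y = y ^ 3 ^ m` (so `σ (σ y) = y ^ 3`) and `χ y = y ^ h` for the quadratic character.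
For a solution `x` with `x, x + a ≠ 0` put `u = x ^ d` and `v = (x + a) ^ d = b - u`. The choice
of `d` gives `σ u * u = χ x * x`, so `x` is determined by `u` and `χ x`.

If `χ x = χ (x + a) = ε`, the two such identities give `σ b * u + b * σ u = σ b * b - ε * a`, and
`u ↦ σ b * u + b * σ u` (`b ≠ 0`) is injective as `σ` squares to the cube map: at most one solution
for each `ε`. If `χ x = -χ (x + a) = -ε`, they give `σ w * w = C` for `w = u + b` and
`C = -(σ b * b) - ε * a`, hence `w ^ 2 = σ C / C`: at most two solutions. Comparing characters in
`(w ^ 2 - b ^ 2) * C = ε * (a * b ^ 2 - σ a)` forces `ε = -χ (a * b ^ 2 - σ a)`, so only one sign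
pattern of this kind occurs, and there are at most `1 + 1 + 2` solutions.

When `a * b ^ 2 = σ a` (this includes `a = 0`, and every case where `0` or `-a` is a solution)
the same identities confine the solutions to `{0, -a, a}`, or to `{± σ b * b}` if `a = 0`.
-/

theorem Set.ncard_sq_eq_le_two {R : Type*} [CommRing R] [IsDomain R] (c : R) :
    {w : R | w ^ 2 = c}.ncard ≤ 2 := by
  classical
  calc {w : R | w ^ 2 = c}.ncard = (Polynomial.nthRoots 2 c).toFinset.card := by
        rw [← Set.ncard_coe_finset]
        congr 1
        ext w
        simp [Polynomial.mem_nthRoots two_pos]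
    _ ≤ Multiset.card (Polynomial.nthRoots 2 c) := Multiset.toFinset_card_le _
    _ ≤ 2 := Polynomial.card_nthRoots 2 c

theorem eq_zero_of_map_mul_add_mul_map_eq_zero {F : Type*} [Field F] (hF : ringChar F ≠ 2)
    (σ : F →+* F) (hσ : ∀ t, σ (σ t) = t ^ 3) {y z : F} (hy : y ≠ 0)
    (h : σ y * z + y * σ z = 0) : z = 0 := by
  set t := z / y
  have hz : z = t * y := (div_mul_cancel₀ z hy).symm
  have hσt : σ t = -t := by
    rw [hz, map_mul] at h
    have : σ y * y * (t + σ t) = 0 := by linear_combination h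
    rcases mul_eq_zero.mp this with h0 | h0
    · exact absurd h0 (mul_ne_zero ((map_ne_zero σ).mpr hy) hy)
    · linear_combination h0
  -- `σ` fixes `±1`, so `σ t = -t` and `t ^ 3 = σ (σ t) = t` leave only `t = 0`
  have ht : t * (t - 1) * (t + 1) = 0 := by
    have := hσ t
    rw [hσt, map_neg, hσt, neg_neg] at this
    linear_combination -this
  have h1 : σ 1 = (1 : F) := map_one σ
  rcases mul_eq_zero.mp ht with ht | ht
  · rcases mul_eq_zero.mp ht with ht | ht
    · rw [hz, ht, zero_mul]
    · rw [sub_eq_zero.mp ht] at hσt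
      exact absurd (by linear_combination hσt - h1) (Ring.two_ne_zero hF)
  · rw [eq_neg_of_add_eq_zero_left ht, map_neg, neg_neg] at hσt
    exact absurd (by linear_combination -hσt - h1) (Ring.two_ne_zero hF)

namespace MinusOneDifferential

/-- The exponents attached to `F = GF(3 ^ n)`, `n ≡ 3 [MOD 4]`: `m = (n + 1) / 2`,
`d = (3 ^ m - 1) / 2` and `h = (3 ^ n - 1) / 2`. -/
structure Exponents (F : Type*) [Fintype F] (m d h : ℕ) : Prop where
  card_eq : Fintype.card F = 2 * h + 1
  odd_h : Odd h
  three_pow_mul_self : 3 ^ m * 3 ^ m = 3 * Fintype.card F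
  two_mul_add_one : 2 * d + 1 = 3 ^ m
  even_d : Even d

def signedSolutions {F : Type*} [Field F] (d h : ℕ) (a b ε₁ ε₂ : F) : Set F :=
  {x | (x + a) ^ d + x ^ d = b ∧ x ≠ 0 ∧ x + a ≠ 0 ∧ x ^ h = ε₁ ∧ (x + a) ^ h = ε₂}

namespace Exponents

variable {F : Type*} [Fintype F] {m d h : ℕ}

theorem mul_add_one_eq (E : Exponents F m d h) : d * (3 ^ m + 1) = 3 * h + 1 := by
  have h1 := E.two_mul_add_one
  have h2 := E.three_pow_mul_self
  rw [E.card_eq, ← h1] at h2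
  rw [← h1]
  nlinarith

theorem d_ne_zero (E : Exponents F m d h) : d ≠ 0 := by
  rintro rfl
  have h1 := E.two_mul_add_one
  have h2 := E.three_pow_mul_self
  rw [← h1, E.card_eq] at h2
  omega

variable [Field F]

theorem pow_two_mul_eq_one (E : Exponents F m d h) {y : F} (hy : y ≠ 0) : y ^ (2 * h) = 1 := by
  rw [show 2 * h = Fintype.card F - 1 by rw [E.card_eq]; rfl]
  exact FiniteField.pow_card_sub_one_eq_one y hy

theorem pow_mul_self_eq_one (E : Exponents F m d h) {y : F} (hy : y ≠ 0) : y ^ h * y ^ h = 1 := by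
  rw [← pow_add, ← two_mul, E.pow_two_mul_eq_one hy]

theorem pow_eq_one_or_eq_neg_one (E : Exponents F m d h) {y : F} (hy : y ≠ 0) :
    y ^ h = 1 ∨ y ^ h = -1 :=
  mul_self_eq_one_iff.mp (E.pow_mul_self_eq_one hy)

theorem sq_pow_eq_one (E : Exponents F m d h) {y : F} (hy : y ≠ 0) : (y ^ 2) ^ h = 1 := by
  rw [← pow_mul, E.pow_two_mul_eq_one hy]

theorem pow_pow_eq_one (E : Exponents F m d h) {y : F} (hy : y ≠ 0) : (y ^ d) ^ h = 1 := by
  obtain ⟨k, hk⟩ := E.even_d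
  rw [hk, ← two_mul, pow_mul', E.sq_pow_eq_one (pow_ne_zero k hy)]

theorem neg_one_pow (E : Exponents F m d h) : (-1 : F) ^ h = -1 := E.odd_h.neg_one_pow

theorem mem_signedSolutions (E : Exponents F m d h) {a b x : F} (hx : (x + a) ^ d + x ^ d = b)
    (hx0 : x ≠ 0) (hxa : x + a ≠ 0) : ∃ ε : F, (ε = 1 ∨ ε = -1) ∧
      (x ∈ signedSolutions d h a b ε ε ∨ x ∈ signedSolutions d h a b (-ε) ε) := by
  refine ⟨(x + a) ^ h, E.pow_eq_one_or_eq_neg_one hxa, ?_⟩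
  rcases E.pow_eq_one_or_eq_neg_one hx0 with h1 | h1 <;>
    rcases E.pow_eq_one_or_eq_neg_one hxa with h2 | h2
  · exact Or.inl ⟨hx, hx0, hxa, by rw [h1, h2], rfl⟩
  · exact Or.inr ⟨hx, hx0, hxa, by rw [h1, h2, neg_neg], rfl⟩
  · exact Or.inr ⟨hx, hx0, hxa, by rw [h1, h2], rfl⟩
  · exact Or.inl ⟨hx, hx0, hxa, by rw [h1, h2], rfl⟩

theorem mul_self_eq_one_of_mem (E : Exponents F m d h) {a b x ε₁ ε : F}
    (hx : x ∈ signedSolutions d h a b ε₁ ε) : ε * ε = 1 :=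
  hx.2.2.2.2 ▸ E.pow_mul_self_eq_one hx.2.2.1

variable [CharP F 3]

local notation "σ" => iterateFrobenius F 3 m

theorem frob_frob (E : Exponents F m d h) (y : F) : σ (σ y) = y ^ 3 := by
  rw [iterateFrobenius_def, iterateFrobenius_def, ← pow_mul, E.three_pow_mul_self, pow_mul',
    FiniteField.pow_card]

theorem frob_eq (E : Exponents F m d h) (y : F) : σ y = y ^ d * y ^ d * y := by
  rw [iterateFrobenius_def, ← E.two_mul_add_one, ← pow_add, ← two_mul, pow_succ]

theorem frob_mul_self (E : Exponents F m d h) (y : F) : σ y * y = (y ^ (d + 1)) ^ 2 := by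
  rw [E.frob_eq]; ring

theorem frob_pow_mul_pow (E : Exponents F m d h) {y : F} (hy : y ≠ 0) :
    σ (y ^ d) * y ^ d = y ^ h * y := by
  have hexp : d * 3 ^ m + d = 2 * h + (h + 1) := by
    have := E.mul_add_one_eq
    rw [mul_add_one] at this
    omega
  rw [iterateFrobenius_def, ← pow_mul, ← pow_add, hexp, pow_add, E.pow_two_mul_eq_one hy, one_mul,
    pow_succ]

theorem eq_pow_mul_frob_pow_mul_pow (E : Exponents F m d h) {y : F} (hy : y ≠ 0) :
    y = y ^ h * (σ (y ^ d) * y ^ d) := by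
  rw [E.frob_pow_mul_pow hy, ← mul_assoc, E.pow_mul_self_eq_one hy, one_mul]

theorem eq_zero_of_frob_mul_add_mul_frob_eq_zero (E : Exponents F m d h) {y z : F} (hy : y ≠ 0)
    (h : σ y * z + y * σ z = 0) : z = 0 :=
  eq_zero_of_map_mul_add_mul_map_eq_zero (by rw [ringChar.eq F 3]; decide) σ E.frob_frob hy h

theorem mul_sq_eq_frob_of_eq (E : Exponents F m d h) {a b : F} (hb : b = a ^ d ∨ b = -a ^ d) :
    a * b ^ 2 = σ a := by
  rw [E.frob_eq]
  rcases hb with rfl | rfl <;> ring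

theorem eq_or_eq_neg_of_mul_sq_eq_frob (E : Exponents F m d h) {a b : F} (ha : a ≠ 0)
    (hab : a * b ^ 2 = σ a) : b = a ^ d ∨ b = -a ^ d := by
  rw [E.frob_eq, show a ^ d * a ^ d * a = a * (a ^ d) ^ 2 by ring] at hab
  exact sq_eq_sq_iff_eq_or_eq_neg.mp (mul_left_cancel₀ ha hab)

section Solution

variable {a b x : F}

theorem ne_zero_of_solution (E : Exponents F m d h) (hx : (x + a) ^ d + x ^ d = b) (hx0 : x ≠ 0)
    (hxa : x + a ≠ 0) : b ≠ 0 := by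
  rintro rfl
  have h1 := E.pow_pow_eq_one hxa
  rw [show (x + a) ^ d = -1 * x ^ d by linear_combination hx, mul_pow, E.neg_one_pow,
    E.pow_pow_eq_one hx0] at h1
  exact one_ne_zero (by linear_combination h1 + CharP.cast_eq_zero F 3 : (1 : F) = 0)

theorem frob_sub_mul_sub (E : Exponents F m d h) (hx : (x + a) ^ d + x ^ d = b)
    (hxa : x + a ≠ 0) : σ (b - x ^ d) * (b - x ^ d) = (x + a) ^ h * (x + a) := by
  rw [← E.frob_pow_mul_pow hxa, show b - x ^ d = (x + a) ^ d by linear_combination -hx]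

variable {ε : F}

theorem frob_mul_add_mul_frob_of_mem_same (E : Exponents F m d h)
    (hx : x ∈ signedSolutions d h a b ε ε) : σ b * x ^ d + b * σ (x ^ d) = σ b * b - ε * a := by
  obtain ⟨hx, hx0, hxa, h1, h2⟩ := hx
  have A1 := E.frob_pow_mul_pow hx0
  have A2 := E.frob_sub_mul_sub hx hxa
  rw [h1] at A1
  rw [h2, map_sub] at A2
  linear_combination A1 - A2

theorem frob_mul_self_of_mem_opp (E : Exponents F m d h)
    (hx : x ∈ signedSolutions d h a b (-ε) ε) :
    σ (x ^ d + b) * (x ^ d + b) = -(σ b * b) - ε * a := by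
  obtain ⟨hx, hx0, hxa, h1, h2⟩ := hx
  have A1 := E.frob_pow_mul_pow hx0
  have A2 := E.frob_sub_mul_sub hx hxa
  rw [h1] at A1
  rw [h2, map_sub] at A2
  rw [map_add]
  linear_combination -(A1 + A2) + (σ (x ^ d) * x ^ d + σ b * b) * CharP.cast_eq_zero F 3

theorem eq_and_mul_sq_eq_frob_of_mem_opp (E : Exponents F m d h)
    (hx : x ∈ signedSolutions d h a b (-ε) ε) (hC : -(σ b * b) - ε * a = 0) :
    x = a ∧ a * b ^ 2 = σ a := by
  have hw := E.frob_mul_self_of_mem_opp hx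
  have hεε := E.mul_self_eq_one_of_mem hx
  obtain ⟨hx, hx0, -, h1, -⟩ := hx
  rw [hC, E.frob_mul_self] at hw
  have hu : x ^ d = -b := by linear_combination eq_zero_of_pow_eq_zero (eq_zero_of_pow_eq_zero hw)
  have hxa' : x = a := by
    have hrec := E.eq_pow_mul_frob_pow_mul_pow hx0
    rw [h1, hu, map_neg] at hrec
    linear_combination hrec + ε * hC + a * hεε
  refine ⟨hxa', E.mul_sq_eq_frob_of_eq (Or.inr ?_)⟩
  rw [hxa', show a + a = -a by linear_combination a * CharP.cast_eq_zero F 3,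
    E.even_d.neg_pow] at hx
  linear_combination -hx + a ^ d * CharP.cast_eq_zero F 3

theorem mul_pow_eq_neg_one_of_mem_opp (E : Exponents F m d h)
    (hx : x ∈ signedSolutions d h a b (-ε) ε) (hC : -(σ b * b) - ε * a ≠ 0) :
    ε * (a * b ^ 2 - σ a) ^ h = -1 := by
  have hw := E.frob_mul_self_of_mem_opp hx
  obtain ⟨hx, hx0, hxa, -, h2⟩ := hx
  have hε : ε = 1 ∨ ε = -1 := h2 ▸ E.pow_eq_one_or_eq_neg_one hxa
  have hσε : σ ε = ε := by rcases hε with rfl | rfl <;> simp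
  have hσC : σ (-(σ b * b) - ε * a) = -(b ^ 3 * σ b) - ε * σ a := by
    simp only [map_sub, map_neg, map_mul, E.frob_frob, hσε]
  generalize hCdef : -(σ b * b) - ε * a = C at hw hC hσC
  generalize hwdef : x ^ d + b = w at hw
  have hw0 : w ≠ 0 := by
    rintro rfl
    exact hC (by rw [← hw, mul_zero])
  have hχC : C ^ h = 1 := by
    rw [← hw, E.frob_mul_self, E.sq_pow_eq_one (pow_ne_zero _ hw0)]
  have hχ : (w ^ 2 - b ^ 2) ^ h = -1 := by
    rw [show w ^ 2 - b ^ 2 = -1 * (x ^ d * (x + a) ^ d) by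
        rw [← hwdef]; linear_combination (x ^ d) * hx + x ^ d * b * CharP.cast_eq_zero F 3,
      mul_pow, mul_pow, E.neg_one_pow, E.pow_pow_eq_one hx0, E.pow_pow_eq_one hxa, mul_one, mul_one]
  have hkey : (w ^ 2 - b ^ 2) * C = ε * (a * b ^ 2 - σ a) := by
    have hσC' : σ C = w ^ 2 * C := by rw [← hw, map_mul, E.frob_frob]; ring
    linear_combination hσC - hσC' + b ^ 2 * hCdef
  have hχε : ε ^ h = ε := by
    rcases hε with rfl | rfl
    · exact one_pow h
    · exact E.neg_one_pow
  calc ε * (a * b ^ 2 - σ a) ^ h = ((w ^ 2 - b ^ 2) * C) ^ h := by rw [hkey, mul_pow, hχε]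
    _ = -1 := by rw [mul_pow, hχ, hχC, mul_one]

end Solution

theorem ncard_signedSolutions_same_le_one (E : Exponents F m d h) (a b ε : F) :
    (signedSolutions d h a b ε ε).ncard ≤ 1 := by
  refine (Set.ncard_le_one (Set.toFinite _)).mpr fun x hx y hy => ?_
  have hb := E.ne_zero_of_solution hx.1 hx.2.1 hx.2.2.1
  have hu : x ^ d - y ^ d = 0 := E.eq_zero_of_frob_mul_add_mul_frob_eq_zero hb (by
    rw [map_sub]
    linear_combination E.frob_mul_add_mul_frob_of_mem_same hx -
      E.frob_mul_add_mul_frob_of_mem_same hy)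
  obtain ⟨-, hx0, -, hxε, -⟩ := hx
  obtain ⟨-, hy0, -, hyε, -⟩ := hy
  rw [E.eq_pow_mul_frob_pow_mul_pow hx0, E.eq_pow_mul_frob_pow_mul_pow hy0, hxε, hyε,
    sub_eq_zero.mp hu]

theorem ncard_signedSolutions_opp_le_two (E : Exponents F m d h) {a b : F}
    (hab : a * b ^ 2 ≠ σ a) (ε : F) : (signedSolutions d h a b (-ε) ε).ncard ≤ 2 := by
  set C := -(σ b * b) - ε * a
  calc (signedSolutions d h a b (-ε) ε).ncard
      ≤ ((fun w => -ε * (σ (w - b) * (w - b))) '' {w | w ^ 2 = σ C / C}).ncard :=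
        Set.ncard_le_ncard ?_ (Set.toFinite _)
    _ ≤ {w | w ^ 2 = σ C / C}.ncard := Set.ncard_image_le (Set.toFinite _)
    _ ≤ 2 := Set.ncard_sq_eq_le_two _
  intro x hx
  have hC : C ≠ 0 := fun hC => hab (E.eq_and_mul_sq_eq_frob_of_mem_opp hx hC).2
  have hw : σ (x ^ d + b) * (x ^ d + b) = C := E.frob_mul_self_of_mem_opp hx
  obtain ⟨-, hx0, -, hxε, -⟩ := hx
  refine ⟨x ^ d + b, ?_, ?_⟩
  · show (x ^ d + b) ^ 2 = σ C / C
    rw [eq_div_iff hC, ← hw, map_mul, E.frob_frob]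
    ring
  · show -ε * (σ (x ^ d + b - b) * (x ^ d + b - b)) = x
    rw [add_sub_cancel_right, ← hxε]
    exact (E.eq_pow_mul_frob_pow_mul_pow hx0).symm

theorem subset_pair_of_eq_zero (E : Exponents F m d h) (b : F) :
    {x : F | (x + 0) ^ d + x ^ d = b} ⊆ {σ b * b, -(σ b * b)} := by
  intro x hx
  have hu : x ^ d = -b := by
    rw [Set.mem_ofPred_eq, add_zero] at hx
    linear_combination -hx + x ^ d * CharP.cast_eq_zero F 3
  rw [Set.mem_insert_iff, Set.mem_singleton_iff]
  by_cases hx0 : x = 0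
  · rw [hx0, zero_pow E.d_ne_zero, zero_eq_neg] at hu
    exact Or.inl (by rw [hx0, hu, mul_zero])
  · have hrec := E.eq_pow_mul_frob_pow_mul_pow hx0
    rw [hu, map_neg, neg_mul_neg] at hrec
    rcases E.pow_eq_one_or_eq_neg_one hx0 with h1 | h1 <;> rw [h1] at hrec
    · exact Or.inl (hrec.trans (one_mul _))
    · exact Or.inr (hrec.trans (neg_one_mul _))

theorem not_mem_signedSolutions_same_of_mul_sq_eq_frob (E : Exponents F m d h) {a b x ε : F}
    (ha : a ≠ 0) (hab : a * b ^ 2 = σ a) : x ∉ signedSolutions d h a b ε ε := by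
  intro hmem
  have hs := E.frob_mul_add_mul_frob_of_mem_same hmem
  have hεε := E.mul_self_eq_one_of_mem hmem
  obtain ⟨hx, hx0, hxa, -, -⟩ := hmem
  have hb := E.ne_zero_of_solution hx hx0 hxa
  have hB : σ b * b = a ^ h * a := by
    rcases E.eq_or_eq_neg_of_mul_sq_eq_frob ha hab with rfl | rfl
    · exact E.frob_pow_mul_pow ha
    · rw [map_neg, neg_mul_neg]
      exact E.frob_pow_mul_pow ha
  have hεa : (ε - a ^ h) * (ε + a ^ h) = 0 := by
    linear_combination hεε - E.pow_mul_self_eq_one ha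
  rcases mul_eq_zero.mp hεa with hεa | hεa
  · have hu : x ^ d = 0 := E.eq_zero_of_frob_mul_add_mul_frob_eq_zero hb (by
      linear_combination hs + hB - a * hεa)
    exact hx0 (eq_zero_of_pow_eq_zero hu)
  · have hu : x ^ d - b = 0 := E.eq_zero_of_frob_mul_add_mul_frob_eq_zero hb (by
      rw [map_sub]
      linear_combination hs - hB - a * hεa)
    exact hxa (eq_zero_of_pow_eq_zero (by linear_combination hx - hu))

theorem subset_triple_of_mul_sq_eq_frob (E : Exponents F m d h) {a b : F} (ha : a ≠ 0)
    (hab : a * b ^ 2 = σ a) : {x : F | (x + a) ^ d + x ^ d = b} ⊆ {0, -a, a} := by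
  intro x hx
  by_contra hmem
  simp only [Set.mem_insert_iff, Set.mem_singleton_iff, not_or] at hmem
  obtain ⟨hx0, hx_ne_neg, hx_ne⟩ := hmem
  have hxa : x + a ≠ 0 := fun h0 => hx_ne_neg (eq_neg_of_add_eq_zero_left h0)
  obtain ⟨ε, -, hmem | hmem⟩ := E.mem_signedSolutions hx hx0 hxa
  · exact E.not_mem_signedSolutions_same_of_mul_sq_eq_frob ha hab hmem
  · by_cases hC : -(σ b * b) - ε * a = 0
    · exact hx_ne (E.eq_and_mul_sq_eq_frob_of_mem_opp hmem hC).1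
    · have := E.mul_pow_eq_neg_one_of_mem_opp hmem hC
      rw [hab, sub_self, zero_pow E.odd_h.pos.ne', mul_zero, zero_eq_neg] at this
      exact one_ne_zero this

theorem subset_union_of_mul_sq_ne_frob (E : Exponents F m d h) {a b : F}
    (hab : a * b ^ 2 ≠ σ a) :
    {x : F | (x + a) ^ d + x ^ d = b} ⊆
      signedSolutions d h a b 1 1 ∪ signedSolutions d h a b (-1) (-1) ∪
        signedSolutions d h a b (-(-(a * b ^ 2 - σ a) ^ h)) (-(a * b ^ 2 - σ a) ^ h) := by
  intro x hx
  have hx0 : x ≠ 0 := by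
    rintro rfl
    rw [Set.mem_ofPred_eq, zero_add, zero_pow E.d_ne_zero, add_zero] at hx
    exact hab (E.mul_sq_eq_frob_of_eq (Or.inl hx.symm))
  have hxa : x + a ≠ 0 := by
    intro h0
    rw [Set.mem_ofPred_eq, h0, eq_neg_of_add_eq_zero_left h0, zero_pow E.d_ne_zero, zero_add,
      E.even_d.neg_pow] at hx
    exact hab (E.mul_sq_eq_frob_of_eq (Or.inl hx.symm))
  obtain ⟨ε, hε, hmem | hmem⟩ := E.mem_signedSolutions hx hx0 hxa
  · left
    rcases hε with rfl | rfl
    exacts [Or.inl hmem, Or.inr hmem]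
  · right
    have hC : -(σ b * b) - ε * a ≠ 0 := fun hC =>
      hab (E.eq_and_mul_sq_eq_frob_of_mem_opp hmem hC).2
    have hεK := E.mul_pow_eq_neg_one_of_mem_opp hmem hC
    have hεε := E.mul_self_eq_one_of_mem hmem
    rwa [show ε = -(a * b ^ 2 - σ a) ^ h by
      linear_combination ε * hεK - (a * b ^ 2 - σ a) ^ h * hεε] at hmem

theorem ncard_le_four (E : Exponents F m d h) (a b : F) :
    {x : F | (x + a) ^ d + x ^ d = b}.ncard ≤ 4 := by
  by_cases hab : a * b ^ 2 = σ a
  · by_cases ha : a = 0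
    · subst ha
      grw [Set.ncard_le_ncard (E.subset_pair_of_eq_zero b), Set.ncard_insert_le,
        Set.ncard_singleton]
      norm_num
    · grw [Set.ncard_le_ncard (E.subset_triple_of_mul_sq_eq_frob ha hab), Set.ncard_insert_le,
        Set.ncard_insert_le, Set.ncard_singleton]
      norm_num
  · grw [Set.ncard_le_ncard (E.subset_union_of_mul_sq_ne_frob hab), Set.ncard_union_le,
      Set.ncard_union_le, E.ncard_signedSolutions_same_le_one, E.ncard_signedSolutions_same_le_one,
      E.ncard_signedSolutions_opp_le_two hab]

end Exponents

theorem exponents_galoisField {n : ℕ} [Fintype (GaloisField 3 n)] (hn : n % 4 = 3) :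
    Exponents (GaloisField 3 n) ((n + 1) / 2) ((3 ^ ((n + 1) / 2) - 1) / 2) ((3 ^ n - 1) / 2) := by
  have hcard : Fintype.card (GaloisField 3 n) = 3 ^ n := by
    rw [← Nat.card_eq_fintype_card, GaloisField.card 3 n (by omega)]
  have hsq : 3 ^ ((n + 1) / 2) * 3 ^ ((n + 1) / 2) = 3 * 3 ^ n := by
    rw [← pow_add, ← pow_succ']
    congr 1
    omega
  obtain ⟨k, hk⟩ : ∃ k, n = 4 * k + 3 := ⟨n / 4, by omega⟩
  have hm4 : 3 ^ ((n + 1) / 2) % 4 = 1 := by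
    rw [show (n + 1) / 2 = 2 * (k + 1) by omega, pow_mul, Nat.pow_mod]
    norm_num
  have hn4 : 3 ^ n % 4 = 3 := by
    rw [hk, show 4 * k + 3 = 2 * (2 * k + 1) + 1 by ring, pow_succ, pow_mul, Nat.mul_mod,
      Nat.pow_mod]
    norm_num
  obtain ⟨i, hi⟩ : ∃ i, 3 ^ ((n + 1) / 2) = 4 * i + 1 :=
    ⟨_, (Nat.div_add_mod _ 4).symm.trans (by rw [hm4])⟩
  obtain ⟨j, hj⟩ : ∃ j, 3 ^ n = 4 * j + 3 := ⟨_, (Nat.div_add_mod _ 4).symm.trans (by rw [hn4])⟩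
  refine ⟨?_, Nat.odd_iff.mpr ?_, hcard ▸ hsq, ?_, Nat.even_iff.mpr ?_⟩
  · rw [hcard, hj]; omega
  · rw [hj]; omega
  · rw [hi]; omega
  · rw [hi]; omega

end MinusOneDifferential

theorem stmt_1_general (n : ℕ) (hcond : n % 4 = 3)
    (d : ℕ) (hd : d = (3 ^ ((n + 1) / 2) - 1) / 2) :
    ∀ a b : GaloisField 3 n,
      {x : GaloisField 3 n | (x + a) ^ d + x ^ d = b}.ncard ≤ 4 := by
  have := Fintype.ofFinite (GaloisField 3 n)
  subst hd
  exact (MinusOneDifferential.exponents_galoisField hcond).ncard_le_four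

theorem stmt_1 (n : ℕ) (hn : 0 < n) (hcond : n % 4 = 3)
    (d : ℕ) (hd : d = (3 ^ ((n + 1) / 2) - 1) / 2) :
    ∀ a b : GaloisField 3 n,
      {x : GaloisField 3 n | (x + a) ^ d + x ^ d = b}.ncard ≤ 4 :=
  stmt_1_general n hcond d hd
end

section
/- Let n be a positive integer with n ≡ 3 (mod 4) and let d' = (3^((n+1)/2) - 1)/2 + (3^n - 1)/2. Then the power function F'(x) = x^{d'} on GF(3^n) has (-1)-differential uniformity at most 2; that is, for all a, b ∈ GF(3^n), the number of x ∈ GF(3^n) satisfying (x+a)^{d'} + x^{d'} = b is at most 2. -/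
variable {K : Type*} [Field K]

theorem three_eq_zero [CharP K 3] : (3 : K) = 0 := CharP.ofNat_eq_zero K 3

theorem eq_zero_of_eq_neg [CharP K 3] {x : K} (h : x = -x) : x = 0 := by
  linear_combination -h + x * three_eq_zero (K := K)

section SquareRootOfFrobenius

variable (σ : K →+* K)

theorem eq_zero_of_map_eq_neg_s2 [CharP K 3] (hσ : ∀ x, σ (σ x) = x ^ 3) {t : K}
    (ht : σ t = -t) : t = 0 := by
  have hcube : t * (t - 1) * (t + 1) = 0 := by
    linear_combination (hσ t).symm.trans (by rw [ht, map_neg, ht, neg_neg])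
  have hfix : σ t = t := by
    rcases mul_eq_zero.1 hcube with h | h
    · rcases mul_eq_zero.1 h with h | h
      · rw [h, map_zero]
      · rw [sub_eq_zero.1 h, map_one]
    · rw [eq_neg_of_add_eq_zero_left h, map_neg, map_one]
  exact eq_zero_of_eq_neg (hfix.symm.trans ht)

theorem map_add_self_injective [CharP K 3] (hσ : ∀ x, σ (σ x) = x ^ 3) :
    Function.Injective fun t => σ t + t := by
  intro t t' h
  refine sub_eq_zero.1 (eq_zero_of_map_eq_neg_s2 σ hσ ?_)
  rw [map_sub]
  linear_combination h

theorem map_mul_map (hσ : ∀ x, σ (σ x) = x ^ 3) (z : K) : σ (z * σ z) = z * σ z * z ^ 2 := by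
  rw [map_mul, hσ]
  ring

theorem eq_or_eq_neg_of_mul_map_eq (hσ : ∀ x, σ (σ x) = x ^ 3) {z z' : K} (hz : z ≠ 0)
    (h : z' * σ z' = z * σ z) : z' = z ∨ z' = -z := by
  have hN : z * σ z ≠ 0 := mul_ne_zero hz ((map_ne_zero σ).2 hz)
  have hsq : z * σ z * z' ^ 2 = z * σ z * z ^ 2 := by
    rw [← map_mul_map σ hσ, ← h, map_mul_map σ hσ, h]
  exact sq_eq_sq_iff_eq_or_eq_neg.1 (mul_left_cancel₀ hN hsq)

end SquareRootOfFrobenius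

section FiniteField

variable [Finite K] {e : ℕ}

theorem pow_natCard_sub_one_eq_one {x : K} (hx : x ≠ 0) : x ^ (Nat.card K - 1) = 1 := by
  cases nonempty_fintype K
  rw [Nat.card_eq_fintype_card]
  exact FiniteField.pow_card_sub_one_eq_one x hx

theorem pow_natCard (x : K) : x ^ Nat.card K = x := by
  cases nonempty_fintype K
  rw [Nat.card_eq_fintype_card]
  exact FiniteField.pow_card x

theorem pow_one_add_mul_natCard_sub_one (x : K) (k : ℕ) :
    x ^ (1 + (Nat.card K - 1) * k) = x := by
  rcases eq_or_ne x 0 with rfl | hx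
  · simp
  · rw [pow_add, pow_one, pow_mul, pow_natCard_sub_one_eq_one hx, one_pow, mul_one]

theorem pow_mul_pow_self_eq_one (hK : Nat.card K = 2 * e + 1) {x : K} (hx : x ≠ 0) :
    x ^ e * x ^ e = 1 := by
  rw [← pow_add, ← two_mul, ← pow_natCard_sub_one_eq_one hx, hK, Nat.add_sub_cancel]

theorem pow_eq_one_or_neg_one (hK : Nat.card K = 2 * e + 1) {x : K} (hx : x ≠ 0) :
    x ^ e = 1 ∨ x ^ e = -1 :=
  mul_self_eq_one_iff.1 (pow_mul_pow_self_eq_one hK hx)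

theorem pow_eq_or_eq_neg (hK : Nat.card K = 2 * e + 1) {x y : K} (hx : x ≠ 0) (hy : y ≠ 0) :
    y ^ e = x ^ e ∨ y ^ e = -x ^ e := by
  rcases pow_eq_one_or_neg_one hK hx with h | h <;>
    rcases pow_eq_one_or_neg_one hK hy with h' | h' <;> simp [h, h']

theorem ne_zero_of_pow_eq (hK : Nat.card K = 2 * e + 1) {x s : K} (h : x ^ e = s) (hs : s ≠ 0) :
    x ≠ 0 := by
  have he : e ≠ 0 := by
    have := Finite.one_lt_card (α := K)
    omega
  rintro rfl
  exact hs (h ▸ zero_pow he)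

theorem pow_eq_mul_pow_of_mul_pow_eq (hK : Nat.card K = 2 * e + 1) {x y s : K} (hy : y ≠ 0)
    (h : (x * y) ^ e = s) : x ^ e = s * y ^ e := by
  rw [← h, mul_pow, mul_assoc, pow_mul_pow_self_eq_one hK hy, mul_one]

theorem mul_map_pow_eq_one (σ : K →+* K) (hK : Nat.card K = 2 * e + 1) {z : K} (hz : z ≠ 0) :
    (z * σ z) ^ e = 1 := by
  rw [mul_pow, ← map_pow]
  rcases pow_eq_one_or_neg_one hK hz with h | h <;> simp [h]

end FiniteField

def signedNorm (σ : K →+* K) (e : ℕ) (x : K) : K := x ^ e * (x * σ x)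

section SignedNorm

variable (σ : K →+* K)

theorem signedNorm_zero (e : ℕ) : signedNorm σ e 0 = 0 := by simp [signedNorm]

theorem signedNorm_one (e : ℕ) : signedNorm σ e 1 = 1 := by simp [signedNorm]

theorem signedNorm_mul (e : ℕ) (x y : K) :
    signedNorm σ e (x * y) = signedNorm σ e x * signedNorm σ e y := by
  simp only [signedNorm, map_mul]
  ring

theorem signedNorm_neg {e : ℕ} (he : Odd e) (x : K) :
    signedNorm σ e (-x) = -signedNorm σ e x := by
  simp only [signedNorm, map_neg, he.neg_pow]
  ring

theorem one_add_ne_zero_of_pow_mul_one_sub_eq_neg_one [CharP K 3] {e : ℕ} {t : K}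
    (ht : (t * (1 - t)) ^ e = -1) : 1 + t ≠ 0 := by
  intro h
  rw [eq_neg_of_add_eq_zero_right h, show -1 * (1 - -1) = (1 : K) by
    linear_combination -three_eq_zero (K := K), one_pow] at ht
  exact one_ne_zero (eq_zero_of_eq_neg ht)

variable [Finite K] {e : ℕ}

theorem map_add_self_eq_of_pow_mul_one_sub_eq_one (hK : Nat.card K = 2 * e + 1) {t w : K}
    (ht : (t * (1 - t)) ^ e = 1) (hT : signedNorm σ e (1 - t) - signedNorm σ e t = w) :
    σ t + t = 1 - (1 - t) ^ e * w := by
  have h1t : 1 - t ≠ 0 := right_ne_zero_of_mul (ne_zero_of_pow_eq hK ht one_ne_zero)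
  have hδ := pow_mul_pow_self_eq_one hK h1t
  have hε := pow_eq_mul_pow_of_mul_pow_eq hK h1t ht
  simp only [signedNorm, map_sub, map_one] at hT
  linear_combination -(1 - t) ^ e * hT + ((1 - t) * (1 - σ t) - t * σ t) * hδ
    - t * σ t * (1 - t) ^ e * hε

theorem mul_map_one_add_eq_of_pow_mul_one_sub_eq_neg_one [CharP K 3]
    (hK : Nat.card K = 2 * e + 1) {t w : K} (ht : (t * (1 - t)) ^ e = -1)
    (hT : signedNorm σ e (1 - t) - signedNorm σ e t = w) :
    (1 + t) * σ (1 + t) = -1 - (1 - t) ^ e * w := by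
  have h1t : 1 - t ≠ 0 :=
    right_ne_zero_of_mul (ne_zero_of_pow_eq hK ht (neg_ne_zero.2 one_ne_zero))
  have hδ := pow_mul_pow_self_eq_one hK h1t
  have hε := pow_eq_mul_pow_of_mul_pow_eq hK h1t ht
  simp only [signedNorm, map_sub, map_add, map_one] at hT ⊢
  linear_combination -(1 - t) ^ e * hT + ((1 - t) * (1 - σ t) + t * σ t) * hδ
    - t * σ t * (1 - t) ^ e * hε + (1 + t * σ t) * three_eq_zero (K := K)

theorem eq_of_pow_mul_one_sub_eq_one [CharP K 3] (hK : Nat.card K = 2 * e + 1)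
    (hσ : ∀ x, σ (σ x) = x ^ 3) {t t' w : K} (ht : (t * (1 - t)) ^ e = 1)
    (hT : signedNorm σ e (1 - t) - signedNorm σ e t = w) (ht' : (t' * (1 - t')) ^ e = 1)
    (hT' : signedNorm σ e (1 - t') - signedNorm σ e t' = w) : t = t' := by
  have h1t : 1 - t ≠ 0 := right_ne_zero_of_mul (ne_zero_of_pow_eq hK ht one_ne_zero)
  have h1t' : 1 - t' ≠ 0 := right_ne_zero_of_mul (ne_zero_of_pow_eq hK ht' one_ne_zero)
  have hE := map_add_self_eq_of_pow_mul_one_sub_eq_one σ hK ht hT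
  have hE' := map_add_self_eq_of_pow_mul_one_sub_eq_one σ hK ht' hT'
  rcases pow_eq_or_eq_neg hK h1t h1t' with hδ | hδ
  · apply map_add_self_injective σ hσ
    simp only [hE, hE', hδ]
  · exfalso
    have ht't : t' = 1 - t := by
      have hsum : σ (t + t') + (t + t') = σ 1 + 1 := by
        rw [map_add, map_one]
        linear_combination hE + hE' - w * hδ
      linear_combination map_add_self_injective σ hσ hsum
    rw [ht't, sub_sub_cancel, pow_eq_mul_pow_of_mul_pow_eq hK h1t ht, one_mul] at hδ
    exact pow_ne_zero e h1t (eq_zero_of_eq_neg hδ)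

theorem eq_of_pow_mul_one_sub_eq_neg_one [CharP K 3] (hK : Nat.card K = 2 * e + 1) (he : Odd e)
    (hσ : ∀ x, σ (σ x) = x ^ 3) {t t' w : K} (ht : (t * (1 - t)) ^ e = -1)
    (hT : signedNorm σ e (1 - t) - signedNorm σ e t = w) (ht' : (t' * (1 - t')) ^ e = -1)
    (hT' : signedNorm σ e (1 - t') - signedNorm σ e t' = w) : t = t' := by
  have h1t : 1 - t ≠ 0 :=
    right_ne_zero_of_mul (ne_zero_of_pow_eq hK ht (neg_ne_zero.2 one_ne_zero))
  have h1t' : 1 - t' ≠ 0 :=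
    right_ne_zero_of_mul (ne_zero_of_pow_eq hK ht' (neg_ne_zero.2 one_ne_zero))
  have hA := mul_map_one_add_eq_of_pow_mul_one_sub_eq_neg_one σ hK ht hT
  have hA' := mul_map_one_add_eq_of_pow_mul_one_sub_eq_neg_one σ hK ht' hT'
  rcases pow_eq_or_eq_neg hK h1t h1t' with hδ | hδ
  · rcases eq_or_eq_neg_of_mul_map_eq σ hσ (one_add_ne_zero_of_pow_mul_one_sub_eq_neg_one ht)
      (z' := 1 + t') (by rw [hA, hA', hδ]) with h | h
    · linear_combination -h
    · exfalso
      have ht't : t' = 1 - t := by linear_combination h - three_eq_zero (K := K)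
      rw [ht't, sub_sub_cancel, pow_eq_mul_pow_of_mul_pow_eq hK h1t ht, neg_one_mul] at hδ
      exact pow_ne_zero e h1t (eq_zero_of_eq_neg hδ.symm)
  · exfalso
    set A := (1 + t) * σ (1 + t)
    set A' := (1 + t') * σ (1 + t')
    have hsum : A + A' = 1 := by
      rw [hA, hA', hδ]
      linear_combination -three_eq_zero (K := K)
    have hσsum : A * (1 + t) ^ 2 + A' * (1 + t') ^ 2 = 1 := by
      rw [← map_mul_map σ hσ, ← map_mul_map σ hσ, ← map_add, hsum, map_one]
    have hclash : A * (t * (1 - t)) = -(A' * (t' * (1 - t'))) := by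
      linear_combination -hσsum + hsum + (A * t + A' * t') * three_eq_zero (K := K)
    have := congrArg (· ^ e) hclash
    simp only [he.neg_pow, mul_pow, ht, ht', A, A',
      mul_map_pow_eq_one σ hK (one_add_ne_zero_of_pow_mul_one_sub_eq_neg_one ht),
      mul_map_pow_eq_one σ hK (one_add_ne_zero_of_pow_mul_one_sub_eq_neg_one ht')] at this
    exact one_ne_zero (eq_zero_of_eq_neg (by linear_combination -this))

theorem eq_zero_of_signedNorm_one_sub_sub_eq_one [CharP K 3] (hK : Nat.card K = 2 * e + 1)
    (hσ : ∀ x, σ (σ x) = x ^ 3) {t : K} (ht : (t * (1 - t)) ^ e ≠ 1)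
    (hT : signedNorm σ e (1 - t) - signedNorm σ e t = 1) : t = 0 := by
  by_contra h0
  have h1 : t ≠ 1 := by
    rintro rfl
    rw [sub_self, signedNorm_zero, signedNorm_one] at hT
    exact one_ne_zero (eq_zero_of_eq_neg (by linear_combination -hT))
  have h1t : 1 - t ≠ 0 := sub_ne_zero.2 h1.symm
  have hneg : (t * (1 - t)) ^ e = -1 :=
    (pow_eq_one_or_neg_one hK (mul_ne_zero h0 h1t)).resolve_left ht
  have hA := mul_map_one_add_eq_of_pow_mul_one_sub_eq_neg_one σ hK hneg hT
  rcases pow_eq_one_or_neg_one hK h1t with hδ | hδ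
  · rw [hδ] at hA
    rcases eq_or_eq_neg_of_mul_map_eq σ hσ one_ne_zero (z' := 1 + t)
      (by rw [hA, map_one]; linear_combination -three_eq_zero (K := K)) with h | h
    · exact h0 (by linear_combination h)
    · exact h1 (by linear_combination h - three_eq_zero (K := K))
  · rw [hδ] at hA
    have h1t0 : 1 + t = 0 := by
      rcases mul_eq_zero.1 (show (1 + t) * σ (1 + t) = 0 by linear_combination hA) with h | h
      · exact h
      · exact (map_eq_zero σ).1 h
    exact one_add_ne_zero_of_pow_mul_one_sub_eq_neg_one hneg h1t0

theorem eq_one_of_signedNorm_one_sub_sub_eq_neg_one [CharP K 3] (hK : Nat.card K = 2 * e + 1)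
    (hσ : ∀ x, σ (σ x) = x ^ 3) {t : K} (ht : (t * (1 - t)) ^ e ≠ 1)
    (hT : signedNorm σ e (1 - t) - signedNorm σ e t = -1) : t = 1 := by
  have := eq_zero_of_signedNorm_one_sub_sub_eq_one σ hK hσ (t := 1 - t)
    (by rwa [sub_sub_cancel, mul_comm]) (by rw [sub_sub_cancel]; linear_combination -hT)
  exact (sub_eq_zero.1 this).symm

theorem ncard_signedNorm_one_sub_sub_eq_le_two [CharP K 3] (hK : Nat.card K = 2 * e + 1)
    (he : Odd e) (hσ : ∀ x, σ (σ x) = x ^ 3) (w : K) :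
    {t | signedNorm σ e (1 - t) - signedNorm σ e t = w}.ncard ≤ 2 := by
  set T := {t | signedNorm σ e (1 - t) - signedNorm σ e t = w}
  have hone : {t ∈ T | (t * (1 - t)) ^ e = 1}.Subsingleton :=
    fun t ⟨hT, ht⟩ t' ⟨hT', ht'⟩ => eq_of_pow_mul_one_sub_eq_one σ hK hσ ht hT ht' hT'
  have hnotOne : {t ∈ T | (t * (1 - t)) ^ e ≠ 1}.Subsingleton := by
    rintro t ⟨hT, ht⟩ t' ⟨hT', ht'⟩
    by_cases hw : w = 1
    · subst hw
      rw [eq_zero_of_signedNorm_one_sub_sub_eq_one σ hK hσ ht hT,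
        eq_zero_of_signedNorm_one_sub_sub_eq_one σ hK hσ ht' hT']
    by_cases hw' : w = -1
    · subst hw'
      rw [eq_one_of_signedNorm_one_sub_sub_eq_neg_one σ hK hσ ht hT,
        eq_one_of_signedNorm_one_sub_sub_eq_neg_one σ hK hσ ht' hT']
    have hneg {s : K} (hS : signedNorm σ e (1 - s) - signedNorm σ e s = w)
        (hs : (s * (1 - s)) ^ e ≠ 1) : (s * (1 - s)) ^ e = -1 := by
      refine (pow_eq_one_or_neg_one hK (mul_ne_zero ?_ (sub_ne_zero.2 ?_))).resolve_left hs
      · rintro rfl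
        rw [sub_zero, signedNorm_zero, signedNorm_one, sub_zero] at hS
        exact hw hS.symm
      · rintro rfl
        rw [sub_self, signedNorm_zero, signedNorm_one, zero_sub] at hS
        exact hw' hS.symm
    exact eq_of_pow_mul_one_sub_eq_neg_one σ hK he hσ (hneg hT ht) hT (hneg hT' ht') hT'
  calc T.ncard ≤ ({t ∈ T | (t * (1 - t)) ^ e = 1} ∪ {t ∈ T | (t * (1 - t)) ^ e ≠ 1}).ncard :=
        Set.ncard_le_ncard (fun t ht => (em _).imp (⟨ht, ·⟩) (⟨ht, ·⟩))
    _ ≤ 1 + 1 := (Set.ncard_union_le _ _).trans (add_le_add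
        (Set.ncard_le_one_iff_subsingleton.2 hone) (Set.ncard_le_one_iff_subsingleton.2 hnotOne))

theorem ncard_add_pow_add_pow_eq_le_two [CharP K 3] (hK : Nat.card K = 2 * e + 1) (he : Odd e)
    (hσ : ∀ x, σ (σ x) = x ^ 3) {d : ℕ} (hd : ∀ x : K, signedNorm σ e (x ^ d) = x)
    (a b : K) : {x : K | (x + a) ^ d + x ^ d = b}.ncard ≤ 2 := by
  by_cases hb : b = 0
  · subst hb
    have key {z : K} (hz : (z + a) ^ d + z ^ d = 0) : z = a := by
      have : z + a = -z := by
        rw [← hd (z + a), eq_neg_of_add_eq_zero_left hz, signedNorm_neg σ he, hd]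
      linear_combination -this + z * three_eq_zero (K := K)
    have hsub : {x : K | (x + a) ^ d + x ^ d = 0}.Subsingleton := fun x hx y hy => by
      rw [key hx, key hy]
    exact (Set.ncard_le_one_iff_subsingleton.2 hsub).trans one_le_two
  refine (Set.ncard_le_ncard_of_injOn (fun x => x ^ d * b⁻¹) ?_ ?_).trans
    (ncard_signedNorm_one_sub_sub_eq_le_two σ hK he hσ (a * signedNorm σ e b⁻¹))
  · intro x hx
    have h1 : 1 - x ^ d * b⁻¹ = (x + a) ^ d * b⁻¹ := by
      rw [← mul_inv_cancel₀ hb, ← sub_mul, ← hx, add_sub_cancel_right]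
    show signedNorm σ e (1 - x ^ d * b⁻¹) - signedNorm σ e (x ^ d * b⁻¹) = _
    rw [h1, signedNorm_mul, signedNorm_mul, hd, hd]
    ring
  · intro x _ y _ hxy
    exact Function.LeftInverse.injective hd (mul_right_cancel₀ (inv_ne_zero hb) hxy)

end SignedNorm

theorem three_pow_two_mul_mod_four (j : ℕ) : 3 ^ (2 * j) % 4 = 1 := by
  rw [pow_mul, Nat.pow_mod]
  norm_num

theorem half_sum_mul_eq_one_add_mul {M q : ℕ} (hM : M * M = 3 * q) (hM4 : M % 4 = 1)
    (hq4 : q % 4 = 3) :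
    ((M - 1) / 2 + (q - 1) / 2) * ((q - 1) / 2 + M + 1) =
      1 + (q - 1) * (3 * (M / 4) + q / 4 + 3) := by
  obtain ⟨a, rfl⟩ : ∃ a, M = 4 * a + 1 := ⟨M / 4, by omega⟩
  obtain ⟨b, rfl⟩ : ∃ b, q = 4 * b + 3 := ⟨q / 4, by omega⟩
  rw [show (4 * a + 1 - 1) / 2 = 2 * a by omega, show (4 * b + 3 - 1) / 2 = 2 * b + 1 by omega,
    show (4 * a + 1) / 4 = a by omega, show (4 * b + 3) / 4 = b by omega,
    show 4 * b + 3 - 1 = 4 * b + 2 by omega]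
  nlinarith

theorem stmt_2_general (n : ℕ) (hcond : n % 4 = 3)
    (d : ℕ) (hd : d = (3 ^ ((n + 1) / 2) - 1) / 2 + (3 ^ n - 1) / 2) :
    ∀ a b : GaloisField 3 n,
      {x : GaloisField 3 n | (x + a) ^ d + x ^ d = b}.ncard ≤ 2 := by
  set m := (n + 1) / 2
  set e := (3 ^ n - 1) / 2
  have hq : Nat.card (GaloisField 3 n) = 3 ^ n := GaloisField.card 3 n (by omega)
  have hq4 : 3 ^ n % 4 = 3 := by
    rw [show n = 2 * (n / 2) + 1 by omega, pow_succ, Nat.mul_mod, three_pow_two_mul_mod_four]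
  have hM4 : 3 ^ m % 4 = 1 := by
    rw [show m = 2 * (m / 2) by omega]
    exact three_pow_two_mul_mod_four _
  have hMM : 3 ^ m * 3 ^ m = 3 * 3 ^ n := by
    rw [← pow_add, ← pow_succ']
    congr 1
    omega
  have hK : Nat.card (GaloisField 3 n) = 2 * e + 1 := by omega
  have he : Odd e := Nat.odd_iff.2 (by omega)
  have hσ (x : GaloisField 3 n) : iterateFrobenius _ 3 m (iterateFrobenius _ 3 m x) = x ^ 3 := by
    rw [iterateFrobenius_def, iterateFrobenius_def, ← pow_mul, hMM, ← hq, pow_mul, pow_natCard]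
  have hinv (x : GaloisField 3 n) : signedNorm (iterateFrobenius _ 3 m) e (x ^ d) = x :=
    calc signedNorm (iterateFrobenius _ 3 m) e (x ^ d) = x ^ (d * (e + 3 ^ m + 1)) := by
          rw [signedNorm, iterateFrobenius_def]
          ring
      _ = x := by
          rw [hd, half_sum_mul_eq_one_add_mul hMM hM4 hq4, ← hq, pow_one_add_mul_natCard_sub_one]
  exact ncard_add_pow_add_pow_eq_le_two _ hK he hσ hinv

theorem stmt_2 (n : ℕ) (hn : 0 < n) (hcond : n % 4 = 3)
    (d : ℕ) (hd : d = (3 ^ ((n + 1) / 2) - 1) / 2 + (3 ^ n - 1) / 2) :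
    ∀ a b : GaloisField 3 n,
      {x : GaloisField 3 n | (x + a) ^ d + x ^ d = b}.ncard ≤ 2 :=
  stmt_2_general n hcond d hd
end

section
/- Let n be a positive integer with n ≡ 1 (mod 4) and let d' = (3^((n+1)/2) - 1)/2 + (3^n - 1)/2. Then the power function F'(x) = x^{d'} on GF(3^n) has (-1)-differential uniformity at most 4; that is, for all a, b ∈ GF(3^n), the number of x ∈ GF(3^n) satisfying (x+a)^{d'} + x^{d'} = b is at most 4. -/
section SquareRootOfFrobenius

variable {K : Type*} [Field K] {σ : K →+* K}

theorem map_map_mul_self (hσ : ∀ x, σ (σ x) = x ^ 3) (c : K) :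
    σ (σ c * c) = c ^ 2 * (σ c * c) := by
  rw [map_mul, hσ]; ring

theorem sq_eq_one_of_map_mul_self_eq_one (hσ : ∀ x, σ (σ x) = x ^ 3) {u : K}
    (hu : σ u * u = 1) : u ^ 2 = 1 := by
  have hu0 : u ≠ 0 := right_ne_zero_of_mul_eq_one hu
  have hσu : σ u = u⁻¹ := eq_inv_of_mul_eq_one_left hu
  have hu3 : u * u ^ 2 = u * 1 := by
    rw [← pow_succ', mul_one, ← hσ, hσu, map_inv₀, hσu, inv_inv]
  exact mul_left_cancel₀ hu0 hu3

theorem eq_zero_of_map_mul_self_eq_zero {t : K} (h : σ t * t = 0) : t = 0 := by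
  rcases mul_eq_zero.mp h with h | h
  · exact (map_eq_zero σ).mp h
  · exact h

theorem eq_or_eq_neg_of_map_mul_self_eq (hσ : ∀ x, σ (σ x) = x ^ 3) {s t : K}
    (h : σ s * s = σ t * t) : s = t ∨ s = -t := by
  rcases eq_or_ne t 0 with rfl | ht
  · rw [map_zero, zero_mul] at h
    exact .inl (eq_zero_of_map_mul_self_eq_zero h)
  have hσt : σ t ≠ 0 := (map_ne_zero σ).mpr ht
  have hst : σ (s / t) * (s / t) = 1 := by
    rw [map_div₀, div_mul_div_comm, h, div_self (mul_ne_zero hσt ht)]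
  have h2 := sq_eq_one_of_map_mul_self_eq_one hσ hst
  rw [div_pow, div_eq_one_iff_eq (pow_ne_zero 2 ht)] at h2
  exact sq_eq_sq_iff_eq_or_eq_neg.mp h2

theorem eq_zero_of_map_mul_add_mul_map_eq_zero_s3 [NeZero (2 : K)] (hσ : ∀ x, σ (σ x) = x ^ 3)
    {b w : K} (hb : b ≠ 0) (h : σ b * w + b * σ w = 0) : w = 0 := by
  have hσb : σ b ≠ 0 := (map_ne_zero σ).mpr hb
  have hσv : σ (w / b) = -(w / b) := by
    rw [map_div₀]
    field_simp
    linear_combination h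
  set v := w / b
  have hv3 : v ^ 3 = v := by rw [← hσ, hσv, map_neg, hσv, neg_neg]
  by_contra hw
  have hv : v ≠ 0 := div_ne_zero hw hb
  have hv2 : v * v = 1 := mul_left_cancel₀ hv (by rw [mul_one]; linear_combination hv3)
  refine two_ne_zero (α := K) ?_
  rcases mul_self_eq_one_iff.mp hv2 with h1 | h1 <;> simp only [h1, map_neg, map_one] at hσv
  · linear_combination hσv
  · linear_combination -hσv

end SquareRootOfFrobenius

section QuadChar

variable {K : Type*} [Field K] [Fintype K]

/-- `quadraticChar K` with values in `K`, cf. `quadraticChar_eq_pow_of_char_ne_two'`. -/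
def quadChar (x : K) : K := x ^ (Fintype.card K / 2)

theorem quadChar_mul (x y : K) : quadChar (x * y) = quadChar x * quadChar y :=
  mul_pow x y _

theorem quadChar_zero : quadChar (0 : K) = 0 :=
  zero_pow (Nat.div_pos Fintype.one_lt_card two_pos).ne'

theorem quadChar_map (σ : K →+* K) (x : K) : quadChar (σ x) = σ (quadChar x) :=
  (map_pow σ x _).symm

variable (hK : Fintype.card K % 4 = 3)
include hK

theorem ringChar_ne_two : ringChar K ≠ 2 := by
  rw [Ne, FiniteField.even_card_iff_char_two]
  omega

theorem quadChar_eq_one_or_neg_one {x : K} (hx : x ≠ 0) : quadChar x = 1 ∨ quadChar x = -1 :=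
  FiniteField.pow_dichotomy (ringChar_ne_two hK) hx

theorem quadChar_mul_self {x : K} (hx : x ≠ 0) : quadChar x * quadChar x = 1 := by
  rcases quadChar_eq_one_or_neg_one hK hx with h | h <;> simp [h]

theorem quadChar_eq_or_eq_neg {x y : K} (hx : x ≠ 0) (hy : y ≠ 0) :
    quadChar y = quadChar x ∨ quadChar y = -quadChar x := by
  rcases quadChar_eq_one_or_neg_one hK hx with h | h <;>
    rcases quadChar_eq_one_or_neg_one hK hy with h' | h' <;> simp [h, h']

theorem quadChar_neg_one : quadChar (-1 : K) = -1 :=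
  Odd.neg_one_pow ⟨Fintype.card K / 4, by omega⟩

theorem quadChar_neg (x : K) : quadChar (-x) = -quadChar x := by
  rw [neg_eq_neg_one_mul, quadChar_mul, quadChar_neg_one hK, neg_one_mul]

theorem quadChar_map_mul_self (σ : K →+* K) {c : K} (hc : c ≠ 0) : quadChar (σ c * c) = 1 := by
  rw [quadChar_mul, quadChar_map]
  rcases quadChar_eq_one_or_neg_one hK hc with h | h <;> simp [h]

theorem quadChar_pow_eq_one_of_even {d : ℕ} (hd : Even d) {x : K} (hx : x ≠ 0) :
    quadChar (x ^ d) = 1 := by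
  obtain ⟨e, rfl⟩ := hd
  rw [pow_add, quadChar_mul, quadChar_mul_self hK (pow_ne_zero e hx)]

theorem not_quadChar_sq_sub_one_eq_neg_one_and {σ : K →+* K} (hσ : ∀ x, σ (σ x) = x ^ 3)
    {c₁ c₂ : K} (h : σ c₁ * c₁ + σ c₂ * c₂ = 1) :
    ¬(quadChar (c₁ ^ 2 - 1) = -1 ∧ quadChar (c₂ ^ 2 - 1) = -1) := by
  rintro ⟨h₁, h₂⟩
  have hN : ∀ c : K, quadChar (c ^ 2 - 1) = -1 → σ c * c ≠ 1 := fun c hc hc1 => by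
    rw [sq_eq_one_of_map_mul_self_eq_one hσ hc1, sub_self, quadChar_zero, zero_eq_neg] at hc
    exact one_ne_zero hc
  have hc₁ : c₁ ≠ 0 := by
    rintro rfl
    exact hN c₂ h₂ (by simpa using h)
  have hc₂ : c₂ ≠ 0 := by
    rintro rfl
    exact hN c₁ h₁ (by simpa using h)
  set u := σ c₁ * c₁
  have hu : σ c₂ * c₂ = 1 - u := by linear_combination h
  have hw₁ : (c₁ ^ 2 - 1) * u = σ u - u := by rw [map_map_mul_self hσ]; ring
  have hw₂ : (c₂ ^ 2 - 1) * (1 - u) = -(σ u - u) := by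
    have := map_map_mul_self hσ c₂
    rw [hu, map_sub, map_one] at this
    linear_combination -this
  -- `quadChar (σ u - u)` is `-1` by `hw₁` but `1` by `hw₂`, as `quadChar (-1) = -1`
  have e₁ := congrArg quadChar hw₁
  have e₂ := congrArg quadChar hw₂
  rw [quadChar_mul, h₁, quadChar_map_mul_self hK σ hc₁, mul_one] at e₁
  rw [quadChar_mul, h₂, ← hu, quadChar_map_mul_self hK σ hc₂, mul_one, quadChar_neg hK, ← e₁,
    neg_neg] at e₂
  exact Ring.neg_one_ne_one_of_char_ne_two (ringChar_ne_two hK) e₂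

end QuadChar

section Counting

variable {K : Type*} [Field K] [Fintype K] {σ : K →+* K} {F : K → K} {a b x x₁ x₂ : K}

theorem apply_zero_eq_zero (hF : ∀ x, σ (F x) * F x = quadChar x * x) : F 0 = 0 :=
  eq_zero_of_map_mul_self_eq_zero (by rw [hF, mul_zero])

theorem quadChar_mul_map_apply_mul_apply (hK : Fintype.card K % 4 = 3)
    (hF : ∀ x, σ (F x) * F x = quadChar x * x) (x : K) : quadChar x * (σ (F x) * F x) = x := by
  rw [hF, ← mul_assoc]
  rcases eq_or_ne x 0 with rfl | hx
  · rw [mul_zero]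
  · rw [quadChar_mul_self hK hx, one_mul]

theorem eq_zero_of_apply_eq_zero (hK : Fintype.card K % 4 = 3)
    (hF : ∀ x, σ (F x) * F x = quadChar x * x) (h : F x = 0) : x = 0 := by
  rw [← quadChar_mul_map_apply_mul_apply hK hF x, h, mul_zero, mul_zero]

theorem map_mul_apply_add_mul_map_apply (hF : ∀ x, σ (F x) * F x = quadChar x * x)
    (hx : F (x + a) + F x = b) :
    σ b * F x + b * σ (F x) = σ b * b + quadChar x * x - quadChar (x + a) * (x + a) := by
  have h := hF (x + a)
  rw [eq_sub_of_add_eq hx, map_sub] at h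
  linear_combination hF x - h

theorem map_apply_add_mul_apply_add [CharP K 3] (hF : ∀ x, σ (F x) * F x = quadChar x * x)
    (hx : F (x + a) + F x = b) :
    σ (F x + b) * (F x + b) = -(quadChar x * x + quadChar (x + a) * (x + a)) - σ b * b := by
  have h3 : (3 : K) = 0 := CharP.ofNat_eq_zero K 3
  rw [map_add]
  linear_combination map_mul_apply_add_mul_map_apply hF hx + hF x +
    (quadChar x * x + σ b * b) * h3

theorem apply_eq_apply_of_solutions (hK : Fintype.card K % 4 = 3) (hσ : ∀ x, σ (σ x) = x ^ 3)
    (hF : ∀ x, σ (F x) * F x = quadChar x * x) (hb : b ≠ 0)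
    (hx₁ : F (x₁ + a) + F x₁ = b) (hx₂ : F (x₂ + a) + F x₂ = b)
    (h : quadChar x₁ * x₁ - quadChar (x₁ + a) * (x₁ + a) =
      quadChar x₂ * x₂ - quadChar (x₂ + a) * (x₂ + a)) : F x₁ = F x₂ := by
  have : NeZero (2 : K) := ⟨Ring.two_ne_zero (ringChar_ne_two hK)⟩
  refine sub_eq_zero.mp (eq_zero_of_map_mul_add_mul_map_eq_zero_s3 hσ hb ?_)
  rw [map_sub]
  linear_combination map_mul_apply_add_mul_map_apply hF hx₁ -
    map_mul_apply_add_mul_map_apply hF hx₂ + h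

theorem apply_add_eq_or_eq_neg_of_solutions [CharP K 3] (hσ : ∀ x, σ (σ x) = x ^ 3)
    (hF : ∀ x, σ (F x) * F x = quadChar x * x)
    (hx₁ : F (x₁ + a) + F x₁ = b) (hx₂ : F (x₂ + a) + F x₂ = b)
    (h : quadChar x₁ * x₁ + quadChar (x₁ + a) * (x₁ + a) =
      quadChar x₂ * x₂ + quadChar (x₂ + a) * (x₂ + a)) :
    F x₁ + b = F x₂ + b ∨ F x₁ + b = -(F x₂ + b) :=
  eq_or_eq_neg_of_map_mul_self_eq hσ (by
    rw [map_apply_add_mul_apply_add hF hx₁, map_apply_add_mul_apply_add hF hx₂, h])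

theorem exists_eq_of_quadChar_eq (hK : Fintype.card K % 4 = 3) (hσ : ∀ x, σ (σ x) = x ^ 3)
    (hF : ∀ x, σ (F x) * F x = quadChar x * x) (hb : b ≠ 0) (ε : K) :
    ∃ e, ∀ x, F (x + a) + F x = b → quadChar x = ε → quadChar (x + a) = ε → x = e := by
  by_cases h : ∃ x₀, F (x₀ + a) + F x₀ = b ∧ quadChar x₀ = ε ∧ quadChar (x₀ + a) = ε
  · obtain ⟨x₀, hx₀, hε₀, hε₀'⟩ := h
    refine ⟨x₀, fun x hx hε hε' => ?_⟩
    have hFx :=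
      apply_eq_apply_of_solutions hK hσ hF hb hx hx₀ (by rw [hε, hε', hε₀, hε₀']; ring)
    rw [← quadChar_mul_map_apply_mul_apply hK hF x, ← quadChar_mul_map_apply_mul_apply hK hF x₀,
      hFx, hε, hε₀]
  · exact ⟨0, fun x hx hε hε' => (h ⟨x, hx, hε, hε'⟩).elim⟩

theorem exists_eq_or_eq_of_quadChar_eq_neg [CharP K 3] (hK : Fintype.card K % 4 = 3)
    (hσ : ∀ x, σ (σ x) = x ^ 3) (hF : ∀ x, σ (F x) * F x = quadChar x * x) (ε : K) :
    ∃ p q, ∀ x, F (x + a) + F x = b → quadChar x = ε → quadChar (x + a) = -ε →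
      x = p ∨ x = q := by
  by_cases h : ∃ x₀, F (x₀ + a) + F x₀ = b ∧ quadChar x₀ = ε ∧ quadChar (x₀ + a) = -ε
  · obtain ⟨x₀, hx₀, hε₀, hε₀'⟩ := h
    refine ⟨ε * (σ (F x₀) * F x₀), ε * (σ (-F x₀ - 2 * b) * (-F x₀ - 2 * b)),
      fun x hx hε hε' => ?_⟩
    rw [← quadChar_mul_map_apply_mul_apply hK hF x, hε]
    rcases apply_add_eq_or_eq_neg_of_solutions hσ hF hx hx₀
        (by rw [hε, hε', hε₀, hε₀']; ring) with h | h
    · left; rw [add_right_cancel h]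
    · right; rw [show F x = -F x₀ - 2 * b by linear_combination h]
  · exact ⟨0, 0, fun x hx hε hε' => (h ⟨x, hx, hε, hε'⟩).elim⟩

theorem ne_zero_and_add_ne_zero_of_apply_ne (hF : ∀ x, σ (F x) * F x = quadChar x * x)
    (hFeven : ∀ x, F (-x) = F x) (ha : F a ≠ b) (hx : F (x + a) + F x = b) :
    x ≠ 0 ∧ x + a ≠ 0 := by
  refine ⟨?_, fun h => ?_⟩
  · rintro rfl
    rw [zero_add, apply_zero_eq_zero hF, add_zero] at hx
    exact ha hx
  · rw [eq_neg_of_add_eq_zero_left h, neg_add_cancel, apply_zero_eq_zero hF, zero_add,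
      hFeven] at hx
    exact ha hx

theorem eq_zero_or_eq_neg_of_apply_add_add_apply_eq_zero (hK : Fintype.card K % 4 = 3)
    (hFsq : ∀ x, x ≠ 0 → quadChar (F x) = 1) (hx : F (x + a) + F x = 0) : x = 0 ∨ x = -a := by
  by_contra! hne
  have hxa : x + a ≠ 0 := fun h => hne.2 (eq_neg_of_add_eq_zero_left h)
  have h := hFsq (x + a) hxa
  rw [eq_neg_of_add_eq_zero_left hx, quadChar_neg hK, hFsq x hne.1] at h
  exact Ring.neg_one_ne_one_of_char_ne_two (ringChar_ne_two hK) h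

theorem eq_zero_or_eq_neg_of_apply_add_add_apply_eq_apply [CharP K 3]
    (hK : Fintype.card K % 4 = 3) (hσ : ∀ x, σ (σ x) = x ^ 3)
    (hF : ∀ x, σ (F x) * F x = quadChar x * x) (hFsq : ∀ x, x ≠ 0 → quadChar (F x) = 1)
    (hFeven : ∀ x, F (-x) = F x) (ha : F a ≠ 0) (hx : F (x + a) + F x = F a) :
    x = 0 ∨ x = -a := by
  have h3 : (3 : K) = 0 := CharP.ofNat_eq_zero K 3
  by_contra! hne
  have hxa : x + a ≠ 0 := fun h => hne.2 (eq_neg_of_add_eq_zero_left h)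
  have ha₀ : a ≠ 0 := by rintro rfl; exact ha (apply_zero_eq_zero hF)
  have hFx : F x ≠ 0 := fun h => hne.1 (eq_zero_of_apply_eq_zero hK hF h)
  have hFxa : F x ≠ F a :=
    fun h => hxa (eq_zero_of_apply_eq_zero hK hF (by linear_combination hx - h))
  -- the solutions `0` and `-a` serve as reference points for the comparison lemmas
  have h₀ : F (0 + a) + F 0 = F a := by rw [zero_add, apply_zero_eq_zero hF, add_zero]
  have h₁ : F (-a + a) + F (-a) = F a := by
    rw [neg_add_cancel, apply_zero_eq_zero hF, zero_add, hFeven]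
  rcases quadChar_eq_or_eq_neg hK hne.1 hxa with hε | hε <;>
    rcases quadChar_eq_or_eq_neg hK hne.1 ha₀ with hεa | hεa
  · refine hFx ((apply_eq_apply_of_solutions hK hσ hF ha hx h₀ ?_).trans
      (apply_zero_eq_zero hF))
    rw [zero_add, hε, hεa, quadChar_zero]; ring
  · refine hFxa ((apply_eq_apply_of_solutions hK hσ hF ha hx h₁ ?_).trans (hFeven a))
    rw [neg_add_cancel, quadChar_neg hK, hε, hεa, quadChar_zero]; ring
  · have h := map_apply_add_mul_apply_add hF hx
    rw [hF a, hε, hεa] at h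
    have hsum : F x + F a = 0 := eq_zero_of_map_mul_self_eq_zero (by rw [h]; ring)
    have h' := hFsq x hne.1
    rw [eq_neg_of_add_eq_zero_left hsum, quadChar_neg hK, hFsq a ha₀] at h'
    exact Ring.neg_one_ne_one_of_char_ne_two (ringChar_ne_two hK) h'
  · rcases apply_add_eq_or_eq_neg_of_solutions hσ hF hx h₀
        (by rw [zero_add, hε, hεa, quadChar_zero]; ring) with h | h <;>
      rw [apply_zero_eq_zero hF] at h
    · exact hFx (by linear_combination h)
    · exact hFxa (by linear_combination h - F a * h3)

theorem quadChar_div_sq_sub_one_of_solution [CharP K 3] (hK : Fintype.card K % 4 = 3)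
    (hFsq : ∀ x, x ≠ 0 → quadChar (F x) = 1) (hb : b ≠ 0) (hx : F (x + a) + F x = b)
    (hx₀ : x ≠ 0) (hxa : x + a ≠ 0) : quadChar (((F x + b) / b) ^ 2 - 1) = -1 := by
  have h3 : (3 : K) = 0 := CharP.ofNat_eq_zero K 3
  have h : ((F x + b) / b) ^ 2 - 1 = -1 * (F x * F (x + a)) * (b⁻¹ * b⁻¹) := by
    rw [eq_sub_of_add_eq hx]
    field_simp
    linear_combination F x * b * h3
  rw [h, quadChar_mul, quadChar_mul, quadChar_mul, quadChar_mul, quadChar_neg_one hK,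
    hFsq x hx₀, hFsq _ hxa, quadChar_mul_self hK (inv_ne_zero hb)]
  ring

theorem quadChar_add_ne_one_of_solutions [CharP K 3] (hK : Fintype.card K % 4 = 3)
    (hσ : ∀ x, σ (σ x) = x ^ 3) (hF : ∀ x, σ (F x) * F x = quadChar x * x)
    (hFsq : ∀ x, x ≠ 0 → quadChar (F x) = 1) (hb : b ≠ 0)
    (hx₁ : F (x₁ + a) + F x₁ = b) (h₁ : quadChar x₁ = 1) (h₁' : quadChar (x₁ + a) = -1)
    (hx₂ : F (x₂ + a) + F x₂ = b) (h₂ : quadChar x₂ = -1) : quadChar (x₂ + a) ≠ 1 := by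
  intro h₂'
  have h3 : (3 : K) = 0 := CharP.ofNat_eq_zero K 3
  have ne_zero : ∀ y : K, quadChar y ^ 2 = 1 → y ≠ 0 := by
    rintro y hy rfl
    simp [quadChar_zero] at hy
  refine not_quadChar_sq_sub_one_eq_neg_one_and hK hσ ?_
    ⟨quadChar_div_sq_sub_one_of_solution hK hFsq hb hx₁ (ne_zero _ (by simp [h₁]))
      (ne_zero _ (by simp [h₁'])),
     quadChar_div_sq_sub_one_of_solution hK hFsq hb hx₂ (ne_zero _ (by simp [h₂]))
      (ne_zero _ (by simp [h₂']))⟩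
  have hσb : σ b * b ≠ 0 := mul_ne_zero ((map_ne_zero σ).mpr hb) hb
  rw [map_div₀, map_div₀, div_mul_div_comm, div_mul_div_comm,
    map_apply_add_mul_apply_add hF hx₁, map_apply_add_mul_apply_add hF hx₂, h₁, h₁', h₂, h₂',
    ← add_div, div_eq_one_iff_eq hσb]
  linear_combination (-(σ b * b)) * h3

theorem exists_eq_or_eq_of_quadChar_add_eq_neg [CharP K 3] (hK : Fintype.card K % 4 = 3)
    (hσ : ∀ x, σ (σ x) = x ^ 3) (hF : ∀ x, σ (F x) * F x = quadChar x * x)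
    (hFsq : ∀ x, x ≠ 0 → quadChar (F x) = 1) (hb : b ≠ 0) :
    ∃ p q, ∀ x, F (x + a) + F x = b → x ≠ 0 → quadChar (x + a) = -quadChar x →
      x = p ∨ x = q := by
  by_cases h : ∃ x₁, F (x₁ + a) + F x₁ = b ∧ quadChar x₁ = 1 ∧ quadChar (x₁ + a) = -1
  · obtain ⟨x₁, hx₁, h₁, h₁'⟩ := h
    obtain ⟨p, q, hpq⟩ := exists_eq_or_eq_of_quadChar_eq_neg hK hσ hF (a := a) (b := b) 1
    refine ⟨p, q, fun x hx hx₀ hε => ?_⟩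
    have hx1 : quadChar x = 1 := (quadChar_eq_one_or_neg_one hK hx₀).resolve_right fun h =>
      quadChar_add_ne_one_of_solutions hK hσ hF hFsq hb hx₁ h₁ h₁' hx h (by rw [hε, h, neg_neg])
    exact hpq x hx hx1 (by rw [hε, hx1])
  · obtain ⟨p, q, hpq⟩ := exists_eq_or_eq_of_quadChar_eq_neg hK hσ hF (a := a) (b := b) (-1)
    refine ⟨p, q, fun x hx hx₀ hε => ?_⟩
    have hx1 : quadChar x = -1 := (quadChar_eq_one_or_neg_one hK hx₀).resolve_left fun h' =>
      h ⟨x, hx, h', by rw [hε, h']⟩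
    exact hpq x hx hx1 (by rw [hε, hx1])

theorem ncard_le_four_of_subset {α : Type*} {s : Set α} {e₁ e₂ e₃ e₄ : α}
    (h : s ⊆ {e₁, e₂, e₃, e₄}) : s.ncard ≤ 4 := by
  classical
  calc s.ncard ≤ (({e₁, e₂, e₃, e₄} : Finset α) : Set α).ncard :=
        Set.ncard_le_ncard (by simpa using h)
    _ ≤ 4 := by rw [Set.ncard_coe_finset]; exact Finset.card_le_four

theorem ncard_setOf_apply_add_add_apply_eq_le_four [CharP K 3] (hK : Fintype.card K % 4 = 3)
    (hσ : ∀ x, σ (σ x) = x ^ 3) (hF : ∀ x, σ (F x) * F x = quadChar x * x)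
    (hFsq : ∀ x, x ≠ 0 → quadChar (F x) = 1) (hFeven : ∀ x, F (-x) = F x) (a b : K) :
    {x | F (x + a) + F x = b}.ncard ≤ 4 := by
  by_cases hb : b = 0 ∨ F a = b
  · refine ncard_le_four_of_subset (e₁ := 0) (e₂ := -a) (e₃ := 0) (e₄ := 0) fun x hx => ?_
    have hx' : x = 0 ∨ x = -a := by
      rcases hb with rfl | rfl
      · exact eq_zero_or_eq_neg_of_apply_add_add_apply_eq_zero hK hFsq hx
      · rcases eq_or_ne (F a) 0 with ha | ha
        · exact eq_zero_or_eq_neg_of_apply_add_add_apply_eq_zero hK hFsq (ha ▸ hx)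
        · exact eq_zero_or_eq_neg_of_apply_add_add_apply_eq_apply hK hσ hF hFsq hFeven ha hx
    rcases hx' with rfl | rfl <;> simp
  push Not at hb
  obtain ⟨e₁, he₁⟩ := exists_eq_of_quadChar_eq hK hσ hF hb.1 (a := a) 1
  obtain ⟨e₂, he₂⟩ := exists_eq_of_quadChar_eq hK hσ hF hb.1 (a := a) (-1)
  obtain ⟨p, q, hpq⟩ := exists_eq_or_eq_of_quadChar_add_eq_neg hK hσ hF hFsq hb.1 (a := a)
  refine ncard_le_four_of_subset (e₁ := e₁) (e₂ := e₂) (e₃ := p) (e₄ := q) fun x hx => ?_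
  obtain ⟨hx₀, hxa⟩ := ne_zero_and_add_ne_zero_of_apply_ne hF hFeven hb.2 hx
  rcases quadChar_eq_or_eq_neg hK hx₀ hxa with hε | hε
  · rcases quadChar_eq_one_or_neg_one hK hx₀ with h | h
    · simp [he₁ x hx h (hε.trans h)]
    · simp [he₂ x hx h (hε.trans h)]
  · rcases hpq x hx hx₀ hε with rfl | rfl <;> simp

end Counting

theorem three_pow_two_mul_add_one_mod_four (j : ℕ) : 3 ^ (2 * j + 1) % 4 = 3 := by
  rw [pow_succ, pow_mul, Nat.mul_mod, Nat.pow_mod]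
  norm_num

/-- The exponent `d'` for `n = 2 * k + 1`. -/
def dPrime (k : ℕ) : ℕ := (3 ^ (k + 1) - 1) / 2 + (3 ^ (2 * k + 1) - 1) / 2

theorem even_dPrime {k : ℕ} (hk : Even k) : Even (dPrime k) := by
  obtain ⟨j, rfl⟩ := hk
  have h₁ := three_pow_two_mul_add_one_mod_four j
  have h₂ := three_pow_two_mul_add_one_mod_four (j + j)
  rw [dPrime, show j + j + 1 = 2 * j + 1 by ring, Nat.even_iff]
  generalize 3 ^ (2 * j + 1) = M at *
  generalize 3 ^ (2 * (j + j) + 1) = q at *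
  omega

theorem dPrime_mul_three_pow_add_one (k : ℕ) :
    dPrime k * (3 ^ (k + 1) + 1) = 3 ^ (2 * k + 1) / 2 * (3 ^ (k + 1) + 4) + 1 := by
  obtain ⟨A, hA⟩ : Odd (3 ^ (k + 1)) := Odd.pow (by decide)
  obtain ⟨B, hB⟩ : Odd (3 ^ (2 * k + 1)) := Odd.pow (by decide)
  have hAB : (2 * A + 1) * (2 * A + 1) = 3 * (2 * B + 1) := by
    rw [← hA, ← hB, ← pow_add, ← pow_succ']
    ring_nf
  rw [dPrime, hA, hB, show (2 * A + 1 - 1) / 2 = A by omega,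
    show (2 * B + 1 - 1) / 2 = B by omega, show (2 * B + 1) / 2 = B by omega]
  nlinarith [hAB]

theorem card_mod_four_of_card_eq {K : Type*} [Fintype K] {k : ℕ}
    (hK : Fintype.card K = 3 ^ (2 * k + 1)) : Fintype.card K % 4 = 3 := by
  rw [hK, three_pow_two_mul_add_one_mod_four]

section PowerMap

variable {K : Type*} [Field K] [Fintype K] [CharP K 3] {k : ℕ}

theorem iterateFrobenius_iterateFrobenius_s3 (hK : Fintype.card K = 3 ^ (2 * k + 1)) (x : K) :
    iterateFrobenius K 3 (k + 1) (iterateFrobenius K 3 (k + 1) x) = x ^ 3 := by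
  rw [iterateFrobenius_def, iterateFrobenius_def, ← pow_mul, ← pow_add,
    show k + 1 + (k + 1) = 2 * k + 1 + 1 by ring, pow_succ, pow_mul, ← hK, FiniteField.pow_card]

theorem iterateFrobenius_pow_dPrime_mul_pow_dPrime (hK : Fintype.card K = 3 ^ (2 * k + 1))
    (x : K) : iterateFrobenius K 3 (k + 1) (x ^ dPrime k) * x ^ dPrime k = quadChar x * x := by
  obtain ⟨A, hA⟩ : Odd (3 ^ (k + 1)) := Odd.pow (by decide)
  rw [iterateFrobenius_def, ← pow_mul, ← pow_add, ← mul_add_one, dPrime_mul_three_pow_add_one,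
    ← hK, pow_succ, pow_mul, show 3 ^ (k + 1) + 4 = 2 * (A + 2) + 1 by omega, pow_succ, pow_mul]
  change (quadChar x ^ 2) ^ (A + 2) * quadChar x * x = quadChar x * x
  rcases eq_or_ne x 0 with rfl | hx
  · rw [quadChar_zero, mul_zero, mul_zero]
  · rw [sq, quadChar_mul_self (card_mod_four_of_card_eq hK) hx, one_pow, one_mul]

end PowerMap

theorem stmt_3_general (n : ℕ) (hcond : n % 4 = 1)
    (d : ℕ) (hd : d = (3 ^ ((n + 1) / 2) - 1) / 2 + (3 ^ n - 1) / 2) :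
    ∀ a b : GaloisField 3 n,
      {x : GaloisField 3 n | (x + a) ^ d + x ^ d = b}.ncard ≤ 4 := by
  obtain ⟨k, rfl⟩ : ∃ k, n = 2 * k + 1 := ⟨n / 2, by omega⟩
  obtain rfl : d = dPrime k := by rwa [show (2 * k + 1 + 1) / 2 = k + 1 by omega] at hd
  let _ : Fintype (GaloisField 3 (2 * k + 1)) := Fintype.ofFinite _
  have hK : Fintype.card (GaloisField 3 (2 * k + 1)) = 3 ^ (2 * k + 1) := by
    rw [← Nat.card_eq_fintype_card, GaloisField.card 3 _ (by omega)]
  have hd : Even (dPrime k) := even_dPrime ⟨k / 2, by omega⟩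
  exact ncard_setOf_apply_add_add_apply_eq_le_four (card_mod_four_of_card_eq hK)
    (iterateFrobenius_iterateFrobenius_s3 hK) (iterateFrobenius_pow_dPrime_mul_pow_dPrime hK)
    (fun _ => quadChar_pow_eq_one_of_even (card_mod_four_of_card_eq hK) hd) hd.neg_pow

theorem stmt_3 (n : ℕ) (hn : 0 < n) (hcond : n % 4 = 1)
    (d : ℕ) (hd : d = (3 ^ ((n + 1) / 2) - 1) / 2 + (3 ^ n - 1) / 2) :
    ∀ a b : GaloisField 3 n,
      {x : GaloisField 3 n | (x + a) ^ d + x ^ d = b}.ncard ≤ 4 :=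
  stmt_3_general n hcond d hd
end

section
/- Let n be a positive integer with n ≡ 1 (mod 4) and let d = (3^(n+1) - 1)/8. Then the power function F(x) = x^d on GF(3^n) has (-1)-differential uniformity at most 2; that is, for all a, b ∈ GF(3^n), the number of x ∈ GF(3^n) satisfying (x+a)^d + x^d = b is at most 2. -/
/-!
Write `3 ^ n = 2 * m + 1` with `m` odd, so that `χ x = x ^ m` is the quadratic character and `-1`
is a nonsquare. For `n ≡ 1 (mod 4)` the map `x ↦ x ^ d` is a permutation with inverse
`x ↦ x ^ (m + 4)`, and the substitution `u = x ^ d / b` turns `(x + a) ^ d + x ^ d = b` into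
`(1 - u) ^ (m + 4) - u ^ (m + 4) = c`. Depending on the signs `χ (1 - u)`, `χ u` this reads
`±((1 - u) ^ 4 - u ^ 4) = c` or `±((1 - u) ^ 4 + u ^ 4) = c`, and in characteristic `3` these are
`±(1 - u ^ 3 - u)` and `∓(1 + (u + 1) ^ 4)`. Because `-1` is a nonsquare, `u ↦ u ^ 3 + u` is
injective and `x ^ 4 = y ^ 4` forces `x = ±y`; from this, two distinct solutions `u ∉ {0, 1}` have
different values of `χ (u (1 - u)) = ±1`, so there are at most two of them; the solutions `0`
and `1` occur only for `c = 1` and `c = -1`, and are then unique.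
-/

open Function Set

section PowHalf

variable {F : Type*} [Field F] {m : ℕ}

lemma pow_mul_self_eq_one_of_pow_two_mul_eq_one (hpow : ∀ x : F, x ≠ 0 → x ^ (2 * m) = 1)
    {x : F} (hx : x ≠ 0) : x ^ m * x ^ m = 1 := by
  rw [← pow_add, ← two_mul, hpow x hx]

lemma pow_eq_or_eq_neg_of_pow_two_mul_eq_one (hpow : ∀ x : F, x ≠ 0 → x ^ (2 * m) = 1)
    {x y : F} (hx : x ≠ 0) (hy : y ≠ 0) : y ^ m = x ^ m ∨ y ^ m = -x ^ m := by
  have h : (y ^ m) ^ 2 = (x ^ m) ^ 2 := by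
    rw [← pow_mul, ← pow_mul, mul_comm, hpow x hx, hpow y hy]
  exact sq_eq_sq_iff_eq_or_eq_neg.mp h

lemma pow_eq_one_or_eq_neg_one_of_pow_two_mul_eq_one
    (hpow : ∀ x : F, x ≠ 0 → x ^ (2 * m) = 1) {x : F} (hx : x ≠ 0) :
    x ^ m = 1 ∨ x ^ m = -1 := by
  simpa using pow_eq_or_eq_neg_of_pow_two_mul_eq_one hpow one_ne_zero hx

lemma neg_sq_pow_eq_neg_one (hm : Odd m) (hpow : ∀ x : F, x ≠ 0 → x ^ (2 * m) = 1)
    {s : F} (hs : s ≠ 0) : (-s ^ 2) ^ m = -1 := by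
  rw [hm.neg_pow, ← pow_mul, hpow s hs]

lemma mul_sub_one_pow_eq_one (hm : Odd m) (hpow : ∀ x : F, x ≠ 0 → x ^ (2 * m) = 1)
    {u : F} (hu0 : u ≠ 0) (hu : (1 - u) ^ m = -u ^ m) : (u * (u - 1)) ^ m = 1 := by
  rw [mul_pow, ← neg_sub, hm.neg_pow, hu, neg_neg,
    pow_mul_self_eq_one_of_pow_two_mul_eq_one hpow hu0]

lemma pow_two_mul_mul_add_one_eq_self (hpow : ∀ x : F, x ≠ 0 → x ^ (2 * m) = 1) (k : ℕ)
    (x : F) : x ^ (2 * m * k + 1) = x := by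
  rcases eq_or_ne x 0 with rfl | hx
  · exact zero_pow (Nat.succ_ne_zero _)
  · rw [pow_succ, pow_mul, hpow x hx, one_pow, one_mul]

lemma pow_two_mul_eq_one_of_natCard_eq [Finite F] (hcard : Nat.card F = 2 * m + 1) (x : F)
    (hx : x ≠ 0) : x ^ (2 * m) = 1 := by
  have := Fintype.ofFinite F
  have h := FiniteField.pow_card_sub_one_eq_one x hx
  rwa [Fintype.card_eq_nat_card, hcard, Nat.add_sub_cancel] at h

end PowHalf

section CharThree

variable {F : Type*} [Field F] [CharP F 3] {m : ℕ}

lemma neg_one_ne_one_of_charP_three : (-1 : F) ≠ 1 :=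
  haveI : Fact (2 < 3) := ⟨by norm_num⟩
  CharP.neg_one_ne_one F 3

lemma eq_zero_of_eq_neg_of_charP_three {a : F} (h : a = -a) : a = 0 := by
  linear_combination -h + a * CharP.ofNat_eq_zero F 3

lemma sq_ne_neg_one_of_pow_two_mul_eq_one (hm : Odd m)
    (hpow : ∀ x : F, x ≠ 0 → x ^ (2 * m) = 1) (c : F) : c ^ 2 ≠ -1 := by
  intro hc
  have hc0 : c ≠ 0 := by
    rintro rfl
    have h : (-1 : F) = 0 := by simpa using hc.symm
    exact one_ne_zero (neg_eq_zero.mp h)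
  have := neg_sq_pow_eq_neg_one hm hpow hc0
  rw [hc, neg_neg, one_pow] at this
  exact neg_one_ne_one_of_charP_three this.symm

lemma cube_add_self_injective (hm : Odd m) (hpow : ∀ x : F, x ≠ 0 → x ^ (2 * m) = 1) :
    Injective fun u : F => u ^ 3 + u := by
  intro u v huv
  have h3 : (3 : F) = 0 := CharP.ofNat_eq_zero F 3
  have h : (u - v) * ((u - v) ^ 2 + 1) = 0 := by
    linear_combination huv + (u * v ^ 2 - u ^ 2 * v) * h3
  rcases mul_eq_zero.mp h with h | h
  · exact sub_eq_zero.mp h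
  · exact absurd (eq_neg_of_add_eq_zero_left h) (sq_ne_neg_one_of_pow_two_mul_eq_one hm hpow _)

lemma eq_or_eq_neg_of_pow_four_eq_pow_four (hm : Odd m)
    (hpow : ∀ x : F, x ≠ 0 → x ^ (2 * m) = 1) {x y : F} (h : x ^ 4 = y ^ 4) :
    x = y ∨ x = -y := by
  have h' : (x ^ 2 - y ^ 2) * (x ^ 2 + y ^ 2) = 0 := by linear_combination h
  rcases mul_eq_zero.mp h' with h' | h'
  · exact sq_eq_sq_iff_eq_or_eq_neg.mp (sub_eq_zero.mp h')
  · rcases eq_or_ne y 0 with rfl | hy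
    · left; simpa using h'
    · refine absurd ?_ (sq_ne_neg_one_of_pow_two_mul_eq_one hm hpow (x / y))
      field_simp
      linear_combination h'

lemma one_sub_pow_four_sub_pow_four (u : F) : (1 - u) ^ 4 - u ^ 4 = 1 - (u ^ 3 + u) := by
  linear_combination (-u ^ 3 + 2 * u ^ 2 - u) * (CharP.ofNat_eq_zero F 3)

lemma one_sub_pow_four_add_pow_four (u : F) : (1 - u) ^ 4 + u ^ 4 = -1 - (u + 1) ^ 4 := by
  linear_combination (u ^ 4 + 4 * u ^ 2 + 1) * (CharP.ofNat_eq_zero F 3)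

lemma one_sub_pow_four_sub_pow_four_injective (hm : Odd m)
    (hpow : ∀ x : F, x ≠ 0 → x ^ (2 * m) = 1) :
    Injective fun u : F => (1 - u) ^ 4 - u ^ 4 := by
  intro u v huv
  simp only [one_sub_pow_four_sub_pow_four, sub_right_inj] at huv
  exact cube_add_self_injective hm hpow huv

lemma eq_or_eq_one_sub_of_one_sub_pow_four_add_pow_four_eq (hm : Odd m)
    (hpow : ∀ x : F, x ≠ 0 → x ^ (2 * m) = 1) {u v : F}
    (h : (1 - v) ^ 4 + v ^ 4 = (1 - u) ^ 4 + u ^ 4) : v = u ∨ v = 1 - u := by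
  simp only [one_sub_pow_four_add_pow_four, sub_right_inj] at h
  rcases eq_or_eq_neg_of_pow_four_eq_pow_four hm hpow h with h | h
  · exact .inl (add_right_cancel h)
  · exact .inr (by linear_combination h - CharP.ofNat_eq_zero F 3)

/-- In characteristic `3`, with `A = (u + 1) ^ 2` and `B = (v + 1) ^ 2`, the hypothesis reads
`A ^ 2 + B ^ 2 = 1` and `A - 1 = u * (u - 1)`; the claim is
`(A - 1) * (B - 1) = -(A + B - 1) ^ 2`. -/
lemma mul_sub_one_mul_mul_sub_one_eq_neg_sq {u v : F}
    (h : (1 - u) ^ 4 + u ^ 4 + ((1 - v) ^ 4 + v ^ 4) = 0) :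
    u * (u - 1) * (v * (v - 1)) = -((u + 1) ^ 2 + (v + 1) ^ 2 - 1) ^ 2 := by
  rw [one_sub_pow_four_add_pow_four, one_sub_pow_four_add_pow_four] at h
  linear_combination -h + (u ^ 2 * v ^ 2 + u ^ 2 * v + u * v ^ 2 + 3 * u * v - 1) *
    (CharP.ofNat_eq_zero F 3)

lemma eq_of_pow_mul_one_sub_pow_four_sub_pow_four_eq (hm : Odd m)
    (hpow : ∀ x : F, x ≠ 0 → x ^ (2 * m) = 1) {u v : F} (hu0 : u ≠ 0) (hv0 : v ≠ 0)
    (hu : (1 - u) ^ m = u ^ m)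
    (h : u ^ m * ((1 - u) ^ 4 - u ^ 4) = v ^ m * ((1 - v) ^ 4 - v ^ 4)) : u = v := by
  have hinj := one_sub_pow_four_sub_pow_four_injective hm hpow
  have hum : u ^ m ≠ 0 := pow_ne_zero m hu0
  rcases pow_eq_or_eq_neg_of_pow_two_mul_eq_one hpow hu0 hv0 with hs | hs
  · rw [hs] at h
    exact hinj (mul_left_cancel₀ hum h)
  · -- `(1 - u) ^ 4 - u ^ 4` changes sign under `u ↦ 1 - u`
    have hv : v = 1 - u := hinj <| mul_left_cancel₀ hum <| by
      rw [hs] at h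
      linear_combination h
    rw [hv, hu] at hs
    exact absurd (eq_zero_of_eq_neg_of_charP_three hs) hum

lemma eq_of_pow_mul_one_sub_pow_four_add_pow_four_eq (hm : Odd m)
    (hpow : ∀ x : F, x ≠ 0 → x ^ (2 * m) = 1) {u v : F} (hu0 : u ≠ 0) (hu1 : u ≠ 1)
    (hv0 : v ≠ 0) (hv1 : v ≠ 1) (hu : (1 - u) ^ m = -u ^ m) (hv : (1 - v) ^ m = -v ^ m)
    (h : (1 - u) ^ m * ((1 - u) ^ 4 + u ^ 4) = (1 - v) ^ m * ((1 - v) ^ 4 + v ^ 4)) :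
    u = v := by
  have hu1' : 1 - u ≠ 0 := sub_ne_zero.mpr hu1.symm
  have hv1' : 1 - v ≠ 0 := sub_ne_zero.mpr hv1.symm
  have hεu : (1 - u) ^ m ≠ 0 := pow_ne_zero m hu1'
  rcases pow_eq_or_eq_neg_of_pow_two_mul_eq_one hpow hu1' hv1' with hs | hs
  · rw [hs] at h
    rcases eq_or_eq_one_sub_of_one_sub_pow_four_add_pow_four_eq hm hpow
      (mul_left_cancel₀ hεu h).symm with rfl | rfl
    · rfl
    · rw [sub_sub_cancel, hu] at hs
      exact absurd (eq_zero_of_eq_neg_of_charP_three hs) (pow_ne_zero m hu0)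
  · -- `u * (u - 1) * (v * (v - 1))` would be both a square and minus a nonzero square
    have hsum : (1 - u) ^ 4 + u ^ 4 + ((1 - v) ^ 4 + v ^ 4) = 0 := mul_left_cancel₀ hεu <| by
      rw [hs] at h
      linear_combination h
    have hid := mul_sub_one_mul_mul_sub_one_eq_neg_sq hsum
    have hne : u * (u - 1) * (v * (v - 1)) ≠ 0 := by
      simp [hu0, hv0, sub_eq_zero, hu1, hv1]
    have hS : (u + 1) ^ 2 + (v + 1) ^ 2 - 1 ≠ 0 := fun h0 => hne (by rw [hid, h0]; ring)
    have hχ := congrArg (· ^ m) hid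
    simp only [mul_pow (u * (u - 1)), mul_sub_one_pow_eq_one hm hpow hu0 hu,
      mul_sub_one_pow_eq_one hm hpow hv0 hv, one_mul, neg_sq_pow_eq_neg_one hm hpow hS] at hχ
    exact (neg_one_ne_one_of_charP_three hχ.symm).elim

lemma eq_of_one_sub_mul_pow_eq (hm : Odd m) (hpow : ∀ x : F, x ≠ 0 → x ^ (2 * m) = 1) {c u v : F}
    (hu0 : u ≠ 0) (hu1 : u ≠ 1) (hv0 : v ≠ 0) (hv1 : v ≠ 1)
    (hu : (1 - u) ^ (m + 4) - u ^ (m + 4) = c) (hv : (1 - v) ^ (m + 4) - v ^ (m + 4) = c)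
    (h : ((1 - u) * u) ^ m = ((1 - v) * v) ^ m) : u = v := by
  have hu1' : 1 - u ≠ 0 := sub_ne_zero.mpr hu1.symm
  have hv1' : 1 - v ≠ 0 := sub_ne_zero.mpr hv1.symm
  have hu2 := pow_mul_self_eq_one_of_pow_two_mul_eq_one hpow hu0
  have hv2 := pow_mul_self_eq_one_of_pow_two_mul_eq_one hpow hv0
  rw [pow_add, pow_add] at hu hv
  rw [mul_pow, mul_pow] at h
  rcases pow_eq_or_eq_neg_of_pow_two_mul_eq_one hpow hu0 hu1' with hεu | hεu <;>
    rcases pow_eq_or_eq_neg_of_pow_two_mul_eq_one hpow hv0 hv1' with hεv | hεv <;>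
    rw [hεu, hεv] at h
  · refine eq_of_pow_mul_one_sub_pow_four_sub_pow_four_eq hm hpow hu0 hv0 hεu ?_
    rw [hεu] at hu
    rw [hεv] at hv
    linear_combination hu - hv
  · rw [hu2, neg_mul, hv2] at h
    exact absurd h.symm neg_one_ne_one_of_charP_three
  · rw [hv2, neg_mul, hu2] at h
    exact absurd h neg_one_ne_one_of_charP_three
  · refine eq_of_pow_mul_one_sub_pow_four_add_pow_four_eq hm hpow hu0 hu1 hv0 hv1 hεu hεv ?_
    rw [hεu] at hu ⊢
    rw [hεv] at hv ⊢
    linear_combination hu - hv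

lemma eq_zero_of_one_sub_pow_sub_pow_eq_one (hm : Odd m)
    (hpow : ∀ x : F, x ≠ 0 → x ^ (2 * m) = 1) {u : F}
    (hu : (1 - u) ^ (m + 4) - u ^ (m + 4) = 1) : u = 0 := by
  by_contra hu0
  have hu1 : u ≠ 1 := by
    rintro rfl
    rw [sub_self, zero_pow (by omega), one_pow, zero_sub] at hu
    exact neg_one_ne_one_of_charP_three hu
  have hinj := one_sub_pow_four_sub_pow_four_injective hm hpow
  rw [pow_add, pow_add] at hu
  rcases pow_eq_or_eq_neg_of_pow_two_mul_eq_one hpow hu0 (sub_ne_zero.mpr hu1.symm)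
    with hε | hε <;> rw [hε] at hu <;>
    rcases pow_eq_one_or_eq_neg_one_of_pow_two_mul_eq_one hpow hu0 with hδ | hδ <;>
    rw [hδ] at hu
  · exact hu0 (hinj (by simp only; linear_combination hu))
  · exact hu1 (hinj (by simp only; linear_combination -hu))
  · have h4 : (u + 1) ^ 4 = 0 := by
      linear_combination hu + one_sub_pow_four_add_pow_four u
    obtain rfl : u = -1 := eq_neg_of_add_eq_zero_left (pow_eq_zero_iff (by norm_num) |>.mp h4)
    rw [hm.neg_one_pow] at hδ
    exact neg_one_ne_one_of_charP_three hδ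
  · rcases eq_or_eq_one_sub_of_one_sub_pow_four_add_pow_four_eq hm hpow (u := 0) (v := u)
      (by linear_combination hu) with h | h
    · exact hu0 h
    · exact hu1 (by simpa using h)

lemma eq_one_of_one_sub_pow_sub_pow_eq_neg_one (hm : Odd m)
    (hpow : ∀ x : F, x ≠ 0 → x ^ (2 * m) = 1) {u : F}
    (hu : (1 - u) ^ (m + 4) - u ^ (m + 4) = -1) : u = 1 := by
  have h := eq_zero_of_one_sub_pow_sub_pow_eq_one hm hpow (u := 1 - u)
    (by rw [sub_sub_cancel]; linear_combination -hu)
  exact (sub_eq_zero.mp h).symm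

theorem ncard_setOf_one_sub_pow_sub_pow_eq_le_two [Finite F] (hm : Odd m)
    (hpow : ∀ x : F, x ≠ 0 → x ^ (2 * m) = 1) (c : F) :
    {u : F | (1 - u) ^ (m + 4) - u ^ (m + 4) = c}.ncard ≤ 2 := by
  by_contra! h
  obtain ⟨u₁, hu₁, u₂, hu₂, u₃, hu₃, h₁₂, h₁₃, h₂₃⟩ := (two_lt_ncard).mp h
  rcases eq_or_ne c 1 with rfl | hc1
  · exact h₁₂ ((eq_zero_of_one_sub_pow_sub_pow_eq_one hm hpow hu₁).trans
      (eq_zero_of_one_sub_pow_sub_pow_eq_one hm hpow hu₂).symm)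
  rcases eq_or_ne c (-1) with rfl | hc2
  · exact h₁₂ ((eq_one_of_one_sub_pow_sub_pow_eq_neg_one hm hpow hu₁).trans
      (eq_one_of_one_sub_pow_sub_pow_eq_neg_one hm hpow hu₂).symm)
  have hgen : ∀ {u}, (1 - u) ^ (m + 4) - u ^ (m + 4) = c → u ≠ 0 ∧ u ≠ 1 := fun hu =>
    ⟨by rintro rfl; exact hc1 (by simpa using hu.symm),
      by rintro rfl; exact hc2 (by simpa using hu.symm)⟩
  have hsign : ∀ {u}, (1 - u) ^ (m + 4) - u ^ (m + 4) = c →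
      ((1 - u) * u) ^ m = 1 ∨ ((1 - u) * u) ^ m = -1 := fun hu =>
    pow_eq_one_or_eq_neg_one_of_pow_two_mul_eq_one hpow
      (mul_ne_zero (sub_ne_zero.mpr (hgen hu).2.symm) (hgen hu).1)
  have hne : ∀ {u v}, (1 - u) ^ (m + 4) - u ^ (m + 4) = c →
      (1 - v) ^ (m + 4) - v ^ (m + 4) = c → u ≠ v → ((1 - u) * u) ^ m ≠ ((1 - v) * v) ^ m :=
    fun hu hv huv h => huv (eq_of_one_sub_mul_pow_eq hm hpow (hgen hu).1 (hgen hu).2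
      (hgen hv).1 (hgen hv).2 hu hv h)
  rcases hsign hu₁ with e₁ | e₁ <;> rcases hsign hu₂ with e₂ | e₂ <;>
    rcases hsign hu₃ with e₃ | e₃ <;>
    first
    | exact hne hu₁ hu₂ h₁₂ (e₁.trans e₂.symm)
    | exact hne hu₁ hu₃ h₁₃ (e₁.trans e₃.symm)
    | exact hne hu₂ hu₃ h₂₃ (e₂.trans e₃.symm)

theorem ncard_setOf_add_pow_add_pow_eq_le_two [Finite F] (hm : Odd m)
    (hpow : ∀ x : F, x ≠ 0 → x ^ (2 * m) = 1) {d : ℕ} (hd : ∀ x : F, (x ^ d) ^ (m + 4) = x)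
    (a b : F) : {x : F | (x + a) ^ d + x ^ d = b}.ncard ≤ 2 := by
  rcases eq_or_ne b 0 with rfl | hb
  · calc {x : F | (x + a) ^ d + x ^ d = 0}.ncard ≤ ({a} : Set F).ncard := by
          refine ncard_le_ncard fun x hx => ?_
          have h : x + a = -x := by
            rw [← hd (x + a), eq_neg_of_add_eq_zero_left hx, (hm.add_even (by decide)).neg_pow, hd]
          show x = a
          linear_combination -h + x * CharP.ofNat_eq_zero F 3
      _ ≤ 2 := by simp
  · calc {x : F | (x + a) ^ d + x ^ d = b}.ncard
        ≤ {u : F | (1 - u) ^ (m + 4) - u ^ (m + 4) = a / b ^ (m + 4)}.ncard := by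
          refine ncard_le_ncard_of_injOn (fun x => x ^ d / b) (fun x hx => ?_) ?_
          · have hx : (x + a) ^ d + x ^ d = b := hx
            have h : 1 - x ^ d / b = (x + a) ^ d / b := by
              field_simp
              linear_combination -hx
            simp only [mem_ofPred_eq, h, div_pow, hd]
            ring
          · intro x _ y _ hxy
            exact LeftInverse.injective hd ((div_left_inj' hb).mp hxy)
      _ ≤ 2 := ncard_setOf_one_sub_pow_sub_pow_eq_le_two hm hpow _

end CharThree

lemma three_pow_mod_sixteen {n : ℕ} (hn : n % 4 = 1) : 3 ^ n % 16 = 3 := by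
  rw [← Nat.div_add_mod n 4, hn, pow_succ, pow_mul, Nat.mul_mod, Nat.pow_mod]
  norm_num

theorem stmt_4_general (n : ℕ) (hcond : n % 4 = 1)
    (d : ℕ) (hd : d = (3 ^ (n + 1) - 1) / 8) :
    ∀ a b : GaloisField 3 n,
      {x : GaloisField 3 n | (x + a) ^ d + x ^ d = b}.ncard ≤ 2 := by
  obtain ⟨t, ht⟩ : ∃ t, 3 ^ n = 16 * t + 3 :=
    ⟨3 ^ n / 16, by have := three_pow_mod_sixteen hcond; omega⟩
  obtain rfl : d = 6 * t + 1 := by rw [hd, pow_succ, ht]; omega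
  have hcard : Nat.card (GaloisField 3 n) = 2 * (8 * t + 1) + 1 := by
    rw [GaloisField.card 3 n (by omega), ht]; ring
  have hpow := pow_two_mul_eq_one_of_natCard_eq hcard
  -- `6t + 1` and `8t + 5` are inverse modulo `3 ^ n - 1 = 2 (8t + 1)`
  refine ncard_setOf_add_pow_add_pow_eq_le_two ⟨4 * t, by ring⟩ hpow fun x => ?_
  rw [← pow_mul, show (6 * t + 1) * (8 * t + 1 + 4) = 2 * (8 * t + 1) * (3 * t + 2) + 1 by ring,
    pow_two_mul_mul_add_one_eq_self hpow]

theorem stmt_4 (n : ℕ) (hn : 0 < n) (hcond : n % 4 = 1)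
    (d : ℕ) (hd : d = (3 ^ (n + 1) - 1) / 8) :
    ∀ a b : GaloisField 3 n,
      {x : GaloisField 3 n | (x + a) ^ d + x ^ d = b}.ncard ≤ 2 :=
  stmt_4_general n hcond d hd
end

section
/- Let n be a positive integer with n ≡ 3 (mod 4) and let d = (3^(n+1) - 1)/8. Then the power function F(x) = x^d on GF(3^n) has (-1)-differential uniformity at most 4; that is, for all a, b ∈ GF(3^n), the number of x ∈ GF(3^n) satisfying (x+a)^d + x^d = b is at most 4. -/
theorem ncard_le_two_of_sq_eq {R : Type*} [CommRing R] [NoZeroDivisors R] {s : Set R}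
    (h : ∀ x ∈ s, ∀ y ∈ s, x ^ 2 = y ^ 2) : s.ncard ≤ 2 := by
  obtain rfl | ⟨x, hx⟩ := s.eq_empty_or_nonempty
  · simp
  calc s.ncard ≤ ({x, -x} : Set R).ncard :=
        Set.ncard_le_ncard fun y hy => sq_eq_sq_iff_eq_or_eq_neg.mp (h y hy x hx)
    _ ≤ 2 := (Set.ncard_insert_le _ _).trans (by simp)

section NegOneNotSquare

variable {F : Type*} [Field F]

theorem isSquare_neg_one_of_isSquare_neg {x : F} (hx : IsSquare x) (hnx : IsSquare (-x))
    (hx0 : x ≠ 0) : IsSquare (-1 : F) := by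
  simpa [neg_div, div_self hx0] using hnx.div hx

theorem eq_zero_of_sq_add_sq_eq_zero (hF : ¬IsSquare (-1 : F)) {x y : F}
    (h : x ^ 2 + y ^ 2 = 0) : x = 0 := by
  by_contra hx
  exact hF (isSquare_neg_one_of_isSquare_neg (IsSquare.sq x) ⟨y, by linear_combination -h⟩
    (pow_ne_zero 2 hx))

theorem sq_eq_sq_of_pow_four_eq (hF : ¬IsSquare (-1 : F)) {x y : F} (h : x ^ 4 = y ^ 4) :
    x ^ 2 = y ^ 2 := by
  obtain h' | h' := sq_eq_sq_iff_eq_or_eq_neg.mp (by rw [← pow_mul, ← pow_mul]; exact h :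
    (x ^ 2) ^ 2 = (y ^ 2) ^ 2)
  · exact h'
  · have hx : x = 0 := eq_zero_of_sq_add_sq_eq_zero hF (y := y) (by linear_combination h')
    have hy : y = 0 := eq_zero_of_sq_add_sq_eq_zero hF (y := x) (by linear_combination h')
    rw [hx, hy]

theorem ncard_setOf_pow_four_eq_le_two (hF : ¬IsSquare (-1 : F)) (c : F) :
    {x : F | x ^ 4 = c}.ncard ≤ 2 :=
  ncard_le_two_of_sq_eq fun _ hx _ hy => sq_eq_sq_of_pow_four_eq hF (hx.trans hy.symm)

end NegOneNotSquare

section CharThree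

variable {F : Type*} [Field F] [CharP F 3]

/-- In characteristic 3 this map is additive, and its kernel `{t | t ^ 2 = -b ^ 2}` is trivial. -/
theorem injective_pow_three_add_mul (hF : ¬IsSquare (-1 : F)) (b : F) :
    Function.Injective fun t : F => t ^ 3 + b ^ 2 * t := by
  intro s t h
  have hst : (s - t) * ((s - t) ^ 2 + b ^ 2) = 0 := by grind
  obtain h' | h' := mul_eq_zero.mp hst
  · exact sub_eq_zero.mp h'
  · exact sub_eq_zero.mp (eq_zero_of_sq_add_sq_eq_zero hF h')

theorem ncard_setOf_mul_pow_three_add_mul_eq_le_one [Finite F] (hF : ¬IsSquare (-1 : F))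
    {b c : F} (hc : c ≠ 0) : {t : F | b * (t ^ 3 + b ^ 2 * t) = c}.ncard ≤ 1 := by
  refine (Set.ncard_le_one_iff).mpr fun {s t} hs ht => injective_pow_three_add_mul hF b ?_
  have hb : b ≠ 0 := by rintro rfl; exact hc (by simpa using hs.symm)
  exact mul_left_cancel₀ hb (hs.trans ht.symm)

theorem pow_four_sub_pow_four_eq (u v : F) :
    u ^ 4 - v ^ 4 = -((u + v) * ((u - v) ^ 3 + (u + v) ^ 2 * (u - v))) := by
  grind

theorem pow_four_add_pow_four_eq (u v : F) : u ^ 4 + v ^ 4 = -((u - v) ^ 4 + (u + v) ^ 4) := by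
  grind

/-- Newton's identity `p₄ = -e₂ ^ 2 - e₄` for four elements of sum zero in characteristic 3,
applied to `u, v, -u', -v'`. -/
theorem mul_mul_mul_eq_neg_sq {u v u' v' : F} (hb : u + v = u' + v')
    (h4 : u ^ 4 + v ^ 4 = -(u' ^ 4 + v' ^ 4)) :
    u * v * (u' * v') = -(u * v + u' * v' - (u + v) ^ 2) ^ 2 := by
  grind

theorem false_of_mul_eq_add_sq (hF : ¬IsSquare (-1 : F)) {u v u' v' : F} (hu : IsSquare u)
    (hu' : IsSquare u') (hv' : IsSquare v') (hb : u + v = u' + v') (huv : u * v = (u + v) ^ 2)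
    (h' : u' * v' = 0) (h0 : u ^ 4 + v ^ 4 ≠ 0) : False := by
  have heq : u = v := by
    have : (u - v) ^ 2 = 0 := by grind
    exact sub_eq_zero.mp (pow_eq_zero_iff two_ne_zero |>.mp this)
  subst heq
  have hu0 : u ≠ 0 := by rintro rfl; simp at h0
  refine hF (isSquare_neg_one_of_isSquare_neg hu ?_ hu0)
  obtain h' | h' := mul_eq_zero.mp h'
  · exact (show v' = -u by grind) ▸ hv'
  · exact (show u' = -u by grind) ▸ hu'

theorem false_of_pow_four_add_pow_four_eq_neg (hF : ¬IsSquare (-1 : F)) {u v u' v' : F}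
    (hu : IsSquare u) (hv : IsSquare v) (hu' : IsSquare u') (hv' : IsSquare v')
    (hb : u + v = u' + v') (h4 : u ^ 4 + v ^ 4 = -(u' ^ 4 + v' ^ 4)) (h0 : u ^ 4 + v ^ 4 ≠ 0) :
    False := by
  obtain ⟨r, hr⟩ := (hu.mul hv).mul (hu'.mul hv')
  have hsq : (u * v + u' * v' - (u + v) ^ 2) ^ 2 + r ^ 2 = 0 := by
    linear_combination mul_mul_mul_eq_neg_sq hb h4 - hr
  have he := eq_zero_of_sq_add_sq_eq_zero hF hsq
  have hr0 := eq_zero_of_sq_add_sq_eq_zero hF ((add_comm _ _).trans hsq)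
  obtain h | h := mul_eq_zero.mp (hr.trans (by rw [hr0, mul_zero]))
  · exact false_of_mul_eq_add_sq hF hu' hu hv hb.symm
      (by linear_combination he - h + (u + v + u' + v') * hb) h (by rwa [h4, neg_ne_zero] at h0)
  · exact false_of_mul_eq_add_sq hF hu hu' hv' hb (by linear_combination he - h) h h0

end CharThree

section PowerLike

variable {F : Type*} [Field F] {P : F → F}

theorem pow_four_eq_or_eq_neg (hP : ∀ x, P x ^ 8 = x ^ 2) (x : F) :
    P x ^ 4 = x ∨ P x ^ 4 = -x :=
  sq_eq_sq_iff_eq_or_eq_neg.mp (by rw [← pow_mul]; exact hP x)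

theorem sq_eq_sq_of_apply_eq (hP : ∀ x, P x ^ 8 = x ^ 2) {x y : F} (h : P x = P y) :
    x ^ 2 = y ^ 2 := by
  rw [← hP, ← hP, h]

variable [CharP F 3]

theorem ncard_setOf_apply_add_apply_eq_le_two (hP : ∀ x, P x ^ 8 = x ^ 2) (b : F) :
    {x | P x + P x = b}.ncard ≤ 2 :=
  ncard_le_two_of_sq_eq fun x hx y hy => sq_eq_sq_of_apply_eq hP (by grind)

theorem injOn_apply_add_sub_apply (hP : ∀ x, P x ^ 8 = x ^ 2) {a : F} (ha : a ≠ 0) (b : F) :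
    Set.InjOn (fun x => P (x + a) - P x) {x | P (x + a) + P x = b} := by
  intro x hx y hy hxy
  simp only [Set.mem_ofPred_eq] at hx hy hxy
  have h₁ : (x + a) ^ 2 = (y + a) ^ 2 := sq_eq_sq_of_apply_eq hP (by grind)
  have h₂ : x ^ 2 = y ^ 2 := sq_eq_sq_of_apply_eq hP (by grind)
  have h : a * (x - y) = 0 := by grind
  exact sub_eq_zero.mp ((mul_eq_zero.mp h).resolve_left ha)

theorem exists_forall_pow_four_add_pow_four_eq (hF : ¬IsSquare (-1 : F))
    (hPsq : ∀ x, IsSquare (P x)) {a : F} (ha : a ≠ 0) (b : F) :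
    ∃ s, ∀ x ∈ {x | P (x + a) + P x = b}, P (x + a) ^ 4 + P x ^ 4 = a ∨
      P (x + a) ^ 4 + P x ^ 4 = -a → P (x + a) ^ 4 + P x ^ 4 = s := by
  by_cases h : ∃ y ∈ {x | P (x + a) + P x = b}, P (y + a) ^ 4 + P y ^ 4 = a
  · obtain ⟨y, hy, hya⟩ := h
    refine ⟨a, fun x hx hxa => hxa.resolve_right fun hx' => ?_⟩
    exact false_of_pow_four_add_pow_four_eq_neg hF (hPsq _) (hPsq _) (hPsq _) (hPsq _)
      (hy.trans hx.symm) (by rw [hya, hx', neg_neg]) (by rw [hya]; exact ha)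
  · exact ⟨-a, fun x hx hxa => hxa.resolve_left fun hx' => h ⟨x, hx, hx'⟩⟩

theorem ncard_setOf_apply_add_add_apply_eq_le_four_s5 [Finite F] (hF : ¬IsSquare (-1 : F))
    (hP : ∀ x, P x ^ 8 = x ^ 2) (hPsq : ∀ x, IsSquare (P x)) (a b : F) :
    {x | P (x + a) + P x = b}.ncard ≤ 4 := by
  obtain rfl | ha := eq_or_ne a 0
  · simpa only [add_zero] using (ncard_setOf_apply_add_apply_eq_le_two hP b).trans (by norm_num)
  obtain ⟨s, hs⟩ := exists_forall_pow_four_add_pow_four_eq hF hPsq ha b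
  have hcover : (fun x => P (x + a) - P x) '' {x | P (x + a) + P x = b} ⊆
      {t | b * (t ^ 3 + b ^ 2 * t) = a} ∪ {t | b * (t ^ 3 + b ^ 2 * t) = -a} ∪
        {t | t ^ 4 = -b ^ 4 - s} := by
    rintro _ ⟨x, hx, rfl⟩
    have hsub := pow_four_sub_pow_four_eq (P (x + a)) (P x)
    have hadd := pow_four_add_pow_four_eq (P (x + a)) (P x)
    rw [show P (x + a) + P x = b from hx] at hsub hadd
    have hfour (h : P (x + a) ^ 4 + P x ^ 4 = a ∨ P (x + a) ^ 4 + P x ^ 4 = -a) :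
        (P (x + a) - P x) ^ 4 = -b ^ 4 - s := by
      linear_combination hadd - hs x hx h
    simp only [Set.mem_union, Set.mem_ofPred_eq]
    rcases pow_four_eq_or_eq_neg hP (x + a) with hu | hu <;>
      rcases pow_four_eq_or_eq_neg hP x with hv | hv
    · exact .inl (.inr (by linear_combination hsub - hu + hv))
    · exact .inr (hfour (.inl (by rw [hu, hv]; ring)))
    · exact .inr (hfour (.inr (by rw [hu, hv]; ring)))
    · exact .inl (.inl (by linear_combination hsub - hu + hv))
  rw [← (injOn_apply_add_sub_apply hP ha b).ncard_image]
  calc _ ≤ _ := Set.ncard_le_ncard hcover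
    _ ≤ 1 + 1 + 2 := by
      grw [Set.ncard_union_le, Set.ncard_union_le,
        ncard_setOf_mul_pow_three_add_mul_eq_le_one hF ha,
        ncard_setOf_mul_pow_three_add_mul_eq_le_one hF (neg_ne_zero.mpr ha),
        ncard_setOf_pow_four_eq_le_two hF]

end PowerLike

theorem pow_pow_eight_eq_sq {K : Type*} [Field K] [Fintype K] {d : ℕ}
    (hd : 8 * d + 1 = 3 * Fintype.card K) (x : K) : (x ^ d) ^ 8 = x ^ 2 := by
  obtain rfl | hx := eq_or_ne x 0
  · have : d ≠ 0 := by rintro rfl; omega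
    simp [this]
  · refine mul_right_cancel₀ hx ?_
    rw [← pow_mul, ← pow_succ, Nat.mul_comm, hd, Nat.mul_comm, pow_mul, FiniteField.pow_card]
    ring

theorem three_pow_succ_mod_sixteen {n : ℕ} (hn : n % 4 = 3) : 3 ^ (n + 1) % 16 = 1 := by
  obtain ⟨k, rfl⟩ : ∃ k, n = 4 * k + 3 := ⟨n / 4, by omega⟩
  rw [show 4 * k + 3 + 1 = 4 * (k + 1) by ring, pow_mul, Nat.pow_mod]
  norm_num

theorem stmt_5_general (n : ℕ) (hcond : n % 4 = 3)
    (d : ℕ) (hd : d = (3 ^ (n + 1) - 1) / 8) :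
    ∀ a b : GaloisField 3 n,
      {x : GaloisField 3 n | (x + a) ^ d + x ^ d = b}.ncard ≤ 4 := by
  have := Fintype.ofFinite (GaloisField 3 n)
  have hcard : Fintype.card (GaloisField 3 n) = 3 ^ n := by
    rw [← Nat.card_eq_fintype_card, GaloisField.card 3 n (by omega)]
  have h16 := three_pow_succ_mod_sixteen hcond
  have hsucc := pow_succ 3 n
  have hF : ¬IsSquare (-1 : GaloisField 3 n) := by
    rw [FiniteField.isSquare_neg_one_iff, hcard]
    omega
  exact ncard_setOf_apply_add_add_apply_eq_le_four_s5 hF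
    (pow_pow_eight_eq_sq (by rw [hcard]; omega)) (Even.isSquare_pow (by rw [Nat.even_iff]; omega))

theorem stmt_5 (n : ℕ) (hn : 0 < n) (hcond : n % 4 = 3)
    (d : ℕ) (hd : d = (3 ^ (n + 1) - 1) / 8) :
    ∀ a b : GaloisField 3 n,
      {x : GaloisField 3 n | (x + a) ^ d + x ^ d = b}.ncard ≤ 4 :=
  stmt_5_general n hcond d hd
end

section
/- Let n be a positive integer with n ≡ 1 (mod 4), let d = (3^((n+1)/2) - 1)/2, and let b ∈ GF(3^n). Then there do not simultaneously exist x₁, x₂ ∈ GF(3^n) such that (x₁+1)^d + x₁^d = b, (x₂+1)^d + x₂^d = b, both x₁ and x₁+1 are nonzero squares in GF(3^n), and both x₂ and x₂+1 are nonsquares in GF(3^n). -/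
theorem Nat.three_pow_mod_four_of_odd {m : ℕ} (hm : Odd m) : 3 ^ m % 4 = 3 := by
  obtain ⟨k, rfl⟩ := hm
  rw [pow_succ, pow_mul, Nat.mul_mod, Nat.pow_mod]
  norm_num

theorem add_pow_mul_add_mul_pow {R : Type*} [CommRing R] (p : ℕ) [ExpChar R p] (m : ℕ)
    {r s b : R} (hb : r + s = b) :
    b ^ p ^ m * r + b * r ^ p ^ m = b ^ (p ^ m + 1) + r ^ (p ^ m + 1) - s ^ (p ^ m + 1) := by
  subst hb
  rw [pow_succ, add_pow_expChar_pow]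
  ring

theorem pow_three_mul_card_div_two_add_one {F : Type*} [Field F] [Fintype F] [DecidableEq F]
    (hF : ringChar F ≠ 2) (x : F) :
    x ^ (3 * (Fintype.card F / 2) + 1) = quadraticChar F x * x := by
  rw [pow_succ, pow_mul', ← quadraticChar_eq_pow_of_char_ne_two' hF, ← Int.cast_pow,
    ← MulChar.pow_apply' _ three_ne_zero, (quadraticChar_isQuadratic F).pow_odd (by decide)]

section CharThree

variable {F : Type*} [Field F] [Fintype F] {m : ℕ}

theorem pow_three_pow_pow_three_pow (hq : 3 * Fintype.card F = 3 ^ (2 * m)) (x : F) :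
    (x ^ 3 ^ m) ^ 3 ^ m = x ^ 3 := by
  rw [← pow_mul, ← pow_add, ← two_mul, ← hq, pow_mul', FiniteField.pow_card]

variable [CharP F 3]

theorem eq_zero_of_pow_mul_add_mul_pow_eq_zero (hq : 3 * Fintype.card F = 3 ^ (2 * m))
    {b z : F} (hb : b ≠ 0) (hz : b ^ 3 ^ m * z + b * z ^ 3 ^ m = 0) : z = 0 := by
  have h3 : (3 : F) = 0 := CharP.ofNat_eq_zero F 3
  have hodd : Odd (3 ^ m) := Odd.pow (by decide)
  have hbb : b ^ 3 ^ m * b ≠ 0 := mul_ne_zero (pow_ne_zero _ hb) hb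
  have hz' : b ^ 3 * z ^ 3 ^ m + b ^ 3 ^ m * z ^ 3 = 0 := by
    -- apply the `m`-th power of Frobenius, whose square is the cube map
    have := congrArg (· ^ 3 ^ m) hz
    simp only [add_pow_char_pow, mul_pow, pow_three_pow_pow_three_pow hq] at this
    rwa [zero_pow (by positivity)] at this
  have hcubic : b ^ 3 ^ m * (z * ((z - b) * (z + b))) = 0 := by
    linear_combination hz' - b ^ 2 * hz
  rcases mul_eq_zero.1 hcubic with h | h
  · exact absurd h (pow_ne_zero _ hb)
  rcases mul_eq_zero.1 h with h | h
  · exact h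
  rcases mul_eq_zero.1 h with h | h
  · rw [sub_eq_zero.1 h] at hz
    exact absurd (by linear_combination -hz + b ^ 3 ^ m * b * h3) hbb
  · rw [eq_neg_of_add_eq_zero_left h, hodd.neg_pow] at hz
    exact absurd (by linear_combination hz + b ^ 3 ^ m * b * h3) hbb

theorem pow_mul_add_mul_pow_injective (hq : 3 * Fintype.card F = 3 ^ (2 * m))
    {b : F} (hb : b ≠ 0) : Function.Injective fun y : F => b ^ 3 ^ m * y + b * y ^ 3 ^ m := by
  intro y y' h
  rw [← sub_eq_zero]
  refine eq_zero_of_pow_mul_add_mul_pow_eq_zero hq hb ?_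
  rw [sub_pow_char_pow]
  linear_combination h

variable [DecidableEq F] {d : ℕ}

theorem pow_pow_three_pow_add_one (hq : 3 * Fintype.card F = 3 ^ (2 * m))
    (hd : 2 * d + 1 = 3 ^ m) (x : F) : (x ^ d) ^ (3 ^ m + 1) = quadraticChar F x * x := by
  have hexp : d * (3 ^ m + 1) = 3 * (Fintype.card F / 2) + 1 := by
    rw [pow_mul', sq, ← hd] at hq
    rw [← hd]
    ring_nf at hq ⊢
    omega
  rw [← pow_mul, hexp, pow_three_mul_card_div_two_add_one (by rw [ringChar.eq F 3]; decide)]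

theorem pow_mul_add_mul_pow_eq_of_pow_add_pow_eq (hq : 3 * Fintype.card F = 3 ^ (2 * m))
    (hd : 2 * d + 1 = 3 ^ m) {x y b : F} (hb : x ^ d + y ^ d = b) :
    b ^ 3 ^ m * x ^ d + b * (x ^ d) ^ 3 ^ m =
      b ^ (3 ^ m + 1) + quadraticChar F x * x - quadraticChar F y * y := by
  rw [add_pow_mul_add_mul_pow 3 m hb, pow_pow_three_pow_add_one hq hd,
    pow_pow_three_pow_add_one hq hd]

end CharThree

theorem stmt_13 (n : ℕ) (hn : 0 < n) (hcond : n % 4 = 1)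
    (d : ℕ) (hd : d = (3 ^ ((n + 1) / 2) - 1) / 2) (b : GaloisField 3 n) :
    ¬ ∃ x₁ x₂ : GaloisField 3 n,
        (x₁ + 1) ^ d + x₁ ^ d = b ∧ (x₂ + 1) ^ d + x₂ ^ d = b ∧
        (x₁ ≠ 0 ∧ IsSquare x₁) ∧ (x₁ + 1 ≠ 0 ∧ IsSquare (x₁ + 1)) ∧
        ¬ IsSquare x₂ ∧ ¬ IsSquare (x₂ + 1) := by
  rintro ⟨x₁, x₂, hb₁, hb₂, ⟨hx₁, hx₁sq⟩, ⟨hx₁', hx₁'sq⟩, hx₂, hx₂'⟩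
  classical
  let _ : Fintype (GaloisField 3 n) := Fintype.ofFinite _
  generalize hm : (n + 1) / 2 = m at hd
  have hq : 3 * Fintype.card (GaloisField 3 n) = 3 ^ (2 * m) := by
    rw [← Nat.card_eq_fintype_card, GaloisField.card 3 n hn.ne', ← pow_succ']
    congr 1
    omega
  have h3m : 3 ^ m % 4 = 3 := Nat.three_pow_mod_four_of_odd (Nat.odd_iff.2 (by omega))
  have hd' : 2 * d + 1 = 3 ^ m := by
    have : 0 < 3 ^ m := by positivity
    omega
  have hd_odd : Odd d := Nat.odd_iff.2 (by omega)
  have hχ₁ := (quadraticChar_one_iff_isSquare hx₁).2 hx₁sq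
  have hχ₁' := (quadraticChar_one_iff_isSquare hx₁').2 hx₁'sq
  have hχ₂ := quadraticChar_neg_one_iff_not_isSquare.2 hx₂
  have hχ₂' := quadraticChar_neg_one_iff_not_isSquare.2 hx₂'
  have h₁ := pow_mul_add_mul_pow_eq_of_pow_add_pow_eq hq hd' ((add_comm _ _).trans hb₁)
  have h₂ := pow_mul_add_mul_pow_eq_of_pow_add_pow_eq hq hd' hb₂
  rw [hχ₁, hχ₁'] at h₁
  rw [hχ₂, hχ₂'] at h₂
  have hb : b ≠ 0 := by
    rintro rfl
    simp at h₁
  have heq : x₁ ^ d = (x₂ + 1) ^ d :=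
    pow_mul_add_mul_pow_injective hq hb (by push_cast at h₁ h₂; linear_combination h₁ - h₂)
  have := congrArg (quadraticChar _) heq
  rw [map_pow, map_pow, hχ₁, hχ₂', one_pow, hd_odd.neg_one_pow] at this
  exact absurd this (by decide)
end
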